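/- arXiv:0812.1475 — 9 statements merged into one kernel-verified Lean document; each statement's English description precedes it below -/
import Mathlib

section
/- Let Λ be an artin algebra and T a finite length Λ-module. If ε ∈ Ext^i(M, T') is a universal add(T)-extension of M (i.e., T' ∈ add(T) and the induced map ε*: Hom(T',T) → Ext^i(M,T) is surjective), then there exists a direct sum decomposition T' = I ⊕ J such that ε = ε̄ ⊕ 0 with ε̄ ∈ Ext^i(M, I) a minimal universal add(T)-extension (meaning any θ ∈ End(I) with θ·ε̄ = ε̄ is an automorphism). -/
open CategoryTheory Abelian Limits

attribute [local instance] HasDerivedCategory.standard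

noncomputable instance (Λ : Type) [Ring Λ] : HasExt.{1} (ModuleCat.{0} Λ) :=
  hasExt_of_hasDerivedCategory _

/-- `X` is a direct summand of `M` in `ModuleCat Λ`. -/
def CatSummand {Λ : Type} [Ring Λ] (X M : ModuleCat.{0} Λ) : Prop :=
  ∃ (i : X ⟶ M) (p : M ⟶ X), i ≫ p = 𝟙 X

/-- `X` belongs to `add T`: it is a direct summand of a finite direct sum of
copies of `T`. -/
def CatInAdd {Λ : Type} [Ring Λ] (T X : ModuleCat.{0} Λ) : Prop :=
  ∃ k : ℕ, CatSummand X (ModuleCat.of Λ (Fin k → T))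

/-! If some non-invertible `θ : T' ⟶ T'` fixes `ε`, Fitting's lemma gives `T' = im θⁿ ⊕ ker θⁿ`
with `ker θⁿ ≠ 0`. Since `ε = ε θⁿ` and `θⁿ` lands in `im θⁿ`, the component of `ε` on `ker θⁿ`
vanishes, and we recurse on `im θⁿ`, which has smaller length. Universality passes to the minimal
summand `ε̄` because `ε` is the pushout of `ε̄` along the inclusion of that summand. -/

universe w v u

local notation:80 ε:80 " ◃ " f:81 => Ext.comp ε (Ext.mk₀ f) (add_zero _)

section Ext

variable {C : Type u} [Category.{v} C] [Abelian C] [HasExt.{w} C] {M X Y Z : C} {i : ℕ}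

lemma Ext.comp_mk₀_comp (ε : Ext M X i) (f : X ⟶ Y) (g : Y ⟶ Z) :
    ε ◃ (f ≫ g) = ε ◃ f ◃ g := by
  rw [← Ext.mk₀_comp_mk₀, Ext.comp_assoc_of_third_deg_zero]

lemma Ext.comp_mk₀_pow {ε : Ext M X i} {θ : End X} (hθ : ε ◃ θ = ε) (n : ℕ) :
    ε ◃ (θ ^ n) = ε := by
  induction n with
  | zero => exact Ext.comp_mk₀_id ε
  | succ n ih => rw [pow_succ, End.mul_def, Ext.comp_mk₀_comp, hθ, ih]

lemma Ext.comp_mk₀_add (ε : Ext M X i) (f g : X ⟶ Y) : ε ◃ (f + g) = ε ◃ f + ε ◃ g := by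
  rw [Ext.mk₀_add, Ext.comp_add]

def IsMinimalExt (ε : Ext M X i) : Prop :=
  ∀ θ : X ⟶ X, ε ◃ θ = ε → IsIso θ

def HasMinimalSplitting (ε : Ext M X i) : Prop :=
  ∃ (I J : C) (e : X ≅ I ⊞ J), ε ◃ (e.hom ≫ biprod.snd) = 0 ∧
    IsMinimalExt (ε ◃ (e.hom ≫ biprod.fst))

lemma Ext.eq_comp_mk₀_inl_of_comp_mk₀_snd_eq_zero {I J : C} {ε : Ext M X i} (e : X ≅ I ⊞ J)
    (h : ε ◃ (e.hom ≫ biprod.snd) = 0) :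
    ε = ε ◃ (e.hom ≫ biprod.fst) ◃ (biprod.inl ≫ e.inv) := by
  have hsum : e.hom ≫ biprod.fst ≫ biprod.inl ≫ e.inv + e.hom ≫ biprod.snd ≫ biprod.inr ≫ e.inv
      = 𝟙 X := by
    rw [← Preadditive.comp_add, ← Category.assoc biprod.fst, ← Category.assoc biprod.snd,
      ← Preadditive.add_comp, biprod.total, Category.id_comp, Iso.hom_inv_id]
  conv_lhs => rw [← Ext.comp_mk₀_id ε, ← hsum]
  rw [Ext.comp_mk₀_add, ← Category.assoc, ← Category.assoc e.hom biprod.snd,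
    Ext.comp_mk₀_comp ε (e.hom ≫ biprod.snd), h, Ext.zero_comp, add_zero, Ext.comp_mk₀_comp]

open ZeroObject in
lemma IsMinimalExt.hasMinimalSplitting {ε : Ext M X i} (h : IsMinimalExt ε) :
    HasMinimalSplitting ε :=
  ⟨X, 0, isoBiprodZero (isZero_zero C), by simp, by simpa using h⟩

lemma HasMinimalSplitting.of_biprod {P Q : C} {ε : Ext M X i} (e : X ≅ P ⊞ Q)
    (hQ : ε ◃ (e.hom ≫ biprod.snd) = 0) (hP : HasMinimalSplitting (ε ◃ (e.hom ≫ biprod.fst))) :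
    HasMinimalSplitting ε := by
  obtain ⟨I, J, e', hJ, hI⟩ := hP
  set e'' := e ≪≫ biprod.mapIso e' (Iso.refl Q) ≪≫ biprod.associator I J Q
  have hfst : e''.hom ≫ biprod.fst = (e.hom ≫ biprod.fst) ≫ e'.hom ≫ biprod.fst := by
    simp [e'']
  have hsnd : e''.hom ≫ biprod.snd = (e.hom ≫ biprod.fst) ≫ (e'.hom ≫ biprod.snd) ≫ biprod.inl +
      (e.hom ≫ biprod.snd) ≫ biprod.inr := by
    apply biprod.hom_ext <;> simp [e'']
  refine ⟨I, J ⊞ Q, e'', ?_, ?_⟩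
  · rw [hsnd, Ext.comp_mk₀_add, Ext.comp_mk₀_comp, Ext.comp_mk₀_comp _ _ biprod.inl, hJ,
      Ext.comp_mk₀_comp, hQ, Ext.zero_comp, Ext.zero_comp, add_zero]
  · rwa [hfst, Ext.comp_mk₀_comp]

end Ext

lemma Module.End.exists_isCompl_range_pow_ker_pow {R N : Type*} [Ring R] [AddCommGroup N]
    [Module R N] [IsNoetherian R N] [IsArtinian R N] {f : Module.End R N}
    (hf : ¬ Function.Bijective f) :
    ∃ n, IsCompl (LinearMap.range (f ^ n)) (LinearMap.ker (f ^ n)) ∧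
      LinearMap.range (f ^ n) ≠ ⊤ := by
  obtain ⟨m, hm⟩ := Filter.eventually_atTop.mp f.eventually_isCompl_ker_pow_range_pow
  refine ⟨m + 1, (hm _ m.le_succ).symm, fun htop => hf ?_⟩
  exact IsNoetherian.bijective_of_surjective_endomorphism f
    (surjective_of_iterate_surjective m.succ_ne_zero (LinearMap.range_eq_top.mp htop))

lemma ModuleCat.exists_iso_biprod_of_not_isIso {Λ : Type u} [Ring Λ] {X : ModuleCat.{v} Λ}
    [IsNoetherian Λ X] [IsArtinian Λ X] {θ : End X} (hθ : ¬ IsIso θ) :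
    ∃ (n : ℕ) (P : Submodule Λ X) (Q : ModuleCat.{v} Λ) (e : X ≅ ModuleCat.of Λ P ⊞ Q),
      P ≠ ⊤ ∧ (θ ^ n) ≫ e.hom ≫ biprod.snd = 0 := by
  have hθ' : ¬ Function.Bijective θ.hom := (ConcreteCategory.isIso_iff_bijective θ).not.mp hθ
  obtain ⟨n, hcompl, hP⟩ := Module.End.exists_isCompl_range_pow_ker_pow hθ'
  have hpow : (θ ^ n).hom = θ.hom ^ n := map_pow (ModuleCat.endRingEquiv X) θ n
  let e : ModuleCat.of Λ (LinearMap.range (θ.hom ^ n) × LinearMap.ker (θ.hom ^ n)) ≅ X :=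
    (Submodule.prodEquivOfIsCompl _ _ hcompl).toModuleIso
  refine ⟨n, _, ModuleCat.of Λ (LinearMap.ker (θ.hom ^ n)), (biprodIsoProd _ _ ≪≫ e).symm, hP, ?_⟩
  ext x
  simp only [hpow, ModuleCat.hom_comp, Iso.symm_hom, Iso.trans_inv, Category.assoc,
    biprodIsoProd_inv_comp_snd, ModuleCat.hom_ofHom, LinearMap.comp_apply, LinearMap.snd_apply,
    ModuleCat.hom_zero, LinearMap.zero_apply]
  exact congrArg Subtype.val <|
    (Submodule.prodEquivOfIsCompl_symm_apply_snd_eq_zero _ _ hcompl).mpr ⟨x, rfl⟩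

lemma ModuleCat.hasMinimalSplitting {Λ : Type u} [Ring Λ] [HasExt.{w} (ModuleCat.{v} Λ)]
    {M X : ModuleCat.{v} Λ} (hX : IsFiniteLength Λ X) {i : ℕ} (ε : Ext M X i) :
    HasMinimalSplitting ε := by
  induction hl : Module.length Λ X using WellFoundedLT.induction generalizing X with
  | _ l IH =>
  obtain ⟨_, _⟩ := isFiniteLength_iff_isNoetherian_isArtinian.mp hX
  by_cases hmin : IsMinimalExt ε
  · exact hmin.hasMinimalSplitting
  simp only [IsMinimalExt, not_forall, exists_prop] at hmin
  obtain ⟨θ, hθε, hθ⟩ := hmin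
  obtain ⟨n, P, Q, e, hP, hθP⟩ := ModuleCat.exists_iso_biprod_of_not_isIso (θ := θ) hθ
  refine .of_biprod e ?_ (IH _ ?_ (hX.of_injective P.injective_subtype) _ rfl)
  · rw [← Ext.comp_mk₀_pow hθε n, ← Ext.comp_mk₀_comp, hθP, Ext.mk₀_zero, Ext.comp_zero]
  · exact hl ▸ Submodule.length_lt hP

section Summand

variable {Λ : Type} [Ring Λ] {X Y Z : ModuleCat.{0} Λ}

lemma CatSummand.trans (hXY : CatSummand X Y) (hYZ : CatSummand Y Z) : CatSummand X Z := by
  obtain ⟨i₁, p₁, h₁⟩ := hXY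
  obtain ⟨i₂, p₂, h₂⟩ := hYZ
  exact ⟨i₁ ≫ i₂, p₂ ≫ p₁, by simp [reassoc_of% h₂, h₁]⟩

lemma CatSummand.isFiniteLength (h : CatSummand X Y) (hY : IsFiniteLength Λ Y) :
    IsFiniteLength Λ X := by
  obtain ⟨ι, π, hιπ⟩ := h
  exact hY.of_injective (f := ι.hom) <| Function.LeftInverse.injective (g := π.hom)
    fun x => by simpa using ConcreteCategory.congr_hom hιπ x

lemma CatInAdd.isFiniteLength {T : ModuleCat.{0} Λ} (h : CatInAdd T X) (hT : IsFiniteLength Λ T) :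
    IsFiniteLength Λ X := by
  obtain ⟨k, hk⟩ := h
  obtain ⟨_, _⟩ := isFiniteLength_iff_isNoetherian_isArtinian.mp hT
  exact hk.isFiniteLength <|
    isFiniteLength_iff_isNoetherian_isArtinian.mpr ⟨inferInstance, inferInstance⟩

end Summand

theorem universal_extension_minimal_decomposition_general
    (Λ : Type) [Ring Λ]
    (M T T' : ModuleCat.{0} Λ)
    (hTfl : IsFiniteLength Λ T)
    (hT' : CatInAdd T T') (i : ℕ) (ε : Ext M T' i)
    (huniv : ∀ x : Ext M T i, ∃ θ : T' ⟶ T, ε.comp (Ext.mk₀ θ) (add_zero i) = x) :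
    ∃ (I J : ModuleCat.{0} Λ) (e : T' ≅ I ⊞ J),
      CatInAdd T I ∧
      ε.comp (Ext.mk₀ (e.hom ≫ biprod.snd)) (add_zero i) = 0 ∧
      (∀ x : Ext M T i, ∃ θ : I ⟶ T,
        (ε.comp (Ext.mk₀ (e.hom ≫ biprod.fst)) (add_zero i)).comp
          (Ext.mk₀ θ) (add_zero i) = x) ∧
      (∀ θ : I ⟶ I,
        (ε.comp (Ext.mk₀ (e.hom ≫ biprod.fst)) (add_zero i)).comp
            (Ext.mk₀ θ) (add_zero i)
          = ε.comp (Ext.mk₀ (e.hom ≫ biprod.fst)) (add_zero i) → IsIso θ) := by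
  obtain ⟨I, J, e, hJ, hI⟩ := ModuleCat.hasMinimalSplitting (hT'.isFiniteLength hTfl) ε
  obtain ⟨k, hk⟩ := hT'
  refine ⟨I, J, e, ⟨k, .trans ⟨biprod.inl ≫ e.inv, e.hom ≫ biprod.fst, by simp⟩ hk⟩, hJ,
    fun x => ?_, hI⟩
  obtain ⟨θ, rfl⟩ := huniv x
  refine ⟨biprod.inl ≫ e.inv ≫ θ, ?_⟩
  conv_rhs => rw [Ext.eq_comp_mk₀_inl_of_comp_mk₀_snd_eq_zero e hJ]
  rw [← Ext.comp_mk₀_comp _ (biprod.inl ≫ e.inv), Category.assoc]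

/-- Let `Λ` be an artin algebra (finite module over a commutative artinian
ring `R`) and `T` a finite length module.  If `ε ∈ Ext^i(M, T')` is a
universal `add T`-extension (i.e. `T' ∈ add T` and pushing `ε` out along
morphisms `T' ⟶ T` yields all of `Ext^i(M, T)`), then there is a
decomposition `T' ≅ I ⊞ J` under which `ε = ε̄ ⊕ 0`, where
`ε̄ ∈ Ext^i(M, I)` is a minimal universal `add T`-extension (any
`θ : I ⟶ I` fixing `ε̄` under pushout is an automorphism). -/
theorem universal_extension_minimal_decomposition
    (R Λ : Type) [CommRing R] [IsArtinianRing R] [Ring Λ] [Algebra R Λ]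
    [Module.Finite R Λ]
    (M T T' : ModuleCat.{0} Λ)
    (hMfl : IsFiniteLength Λ M) (hTfl : IsFiniteLength Λ T)
    (hT' : CatInAdd T T') (i : ℕ) (ε : Ext M T' i)
    (huniv : ∀ x : Ext M T i, ∃ θ : T' ⟶ T, ε.comp (Ext.mk₀ θ) (add_zero i) = x) :
    ∃ (I J : ModuleCat.{0} Λ) (e : T' ≅ I ⊞ J),
      CatInAdd T I ∧
      ε.comp (Ext.mk₀ (e.hom ≫ biprod.snd)) (add_zero i) = 0 ∧
      (∀ x : Ext M T i, ∃ θ : I ⟶ T,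
        (ε.comp (Ext.mk₀ (e.hom ≫ biprod.fst)) (add_zero i)).comp
          (Ext.mk₀ θ) (add_zero i) = x) ∧
      (∀ θ : I ⟶ I,
        (ε.comp (Ext.mk₀ (e.hom ≫ biprod.fst)) (add_zero i)).comp
            (Ext.mk₀ θ) (add_zero i)
          = ε.comp (Ext.mk₀ (e.hom ≫ biprod.fst)) (add_zero i) → IsIso θ) :=
  universal_extension_minimal_decomposition_general Λ M T T' hTfl hT' i ε huniv
end

section
/- Minimal universal add(T)-extensions are unique up to isomorphism: if ε ∈ Ext^i(M,T') and η ∈ Ext^i(M,T'') are both minimal universal add(T)-extensions of M, then there is an isomorphism φ: T' → T'' with φ·ε = η. -/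
/-!
Universality of `ε` with respect to `T` passes to finite biproducts of copies of `T` and to their
retracts, hence to all of `add T`. So there are `α : T' ⟶ T''` and `β : T'' ⟶ T'` with `α · ε = η`
and `β · η = ε`; minimality makes `α ≫ β` and `β ≫ α` isomorphisms, hence `α` is one.
-/

open CategoryTheory Abelian Limits

attribute [local instance] HasDerivedCategory.standard

lemma CatInAdd.exists_retract_biproduct {Λ : Type} [Ring Λ] {T X : ModuleCat.{0} Λ}
    (hX : CatInAdd T X) : ∃ k : ℕ, Nonempty (Retract X (⨁ fun _ : Fin k => T)) := by
  obtain ⟨k, s, p, hsp⟩ := hX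
  exact ⟨k, ⟨(⟨s, p, hsp⟩ : Retract _ _).trans (ModuleCat.biproductIsoPi _).symm.retract⟩⟩

lemma CategoryTheory.isIso_of_isIso_comp_of_isIso_comp {C : Type*} [Category C] {X Y : C}
    (α : X ⟶ Y) (β : Y ⟶ X) [IsIso (α ≫ β)] [IsIso (β ≫ α)] : IsIso α :=
  have : Epi α := epi_of_epi β α
  have : IsSplitMono α := ⟨⟨β ≫ inv (α ≫ β), by rw [← Category.assoc, IsIso.hom_inv_id]⟩⟩
  isIso_of_epi_of_isSplitMono α

namespace CategoryTheory.Abelian.Ext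

universe w v u

variable {C : Type u} [Category.{v} C] [Abelian C] [HasExt.{w} C] {M T' : C} {i : ℕ}

def IsUniversalFor (ε : Ext M T' i) (X : C) : Prop :=
  ∀ x : Ext M X i, ∃ θ : T' ⟶ X, ε.comp (mk₀ θ) (add_zero i) = x

def IsMinimal (ε : Ext M T' i) : Prop :=
  ∀ θ : T' ⟶ T', ε.comp (mk₀ θ) (add_zero i) = ε → IsIso θ

lemma comp_mk₀_comp_mk₀ {X Y : C} (ε : Ext M T' i) (α : T' ⟶ X) (β : X ⟶ Y) :
    (ε.comp (mk₀ α) (add_zero i)).comp (mk₀ β) (add_zero i) =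
      ε.comp (mk₀ (α ≫ β)) (add_zero i) := by
  rw [comp_assoc_of_third_deg_zero, mk₀_comp_mk₀]

lemma IsUniversalFor.of_retract {ε : Ext M T' i} {X Y : C} (h : ε.IsUniversalFor X)
    (r : Retract Y X) : ε.IsUniversalFor Y := by
  intro y
  obtain ⟨θ, hθ⟩ := h (y.comp (mk₀ r.i) (add_zero i))
  refine ⟨θ ≫ r.r, ?_⟩
  rw [← comp_mk₀_comp_mk₀, hθ, comp_mk₀_comp_mk₀, r.retract, comp_mk₀_id]

lemma IsUniversalFor.biproduct {ε : Ext M T' i} {J : Type} [Fintype J] {X : J → C} [HasBiproduct X]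
    (h : ∀ j, ε.IsUniversalFor (X j)) : ε.IsUniversalFor (⨁ X) := by
  intro x
  choose θ hθ using fun j => h j (x.comp (mk₀ (biproduct.π X j)) (add_zero i))
  refine ⟨biproduct.lift θ, (addEquivBiproduct M (biproduct.isBilimit X) i).injective ?_⟩
  funext j
  show (ε.comp (mk₀ (biproduct.lift θ)) (add_zero i)).comp (mk₀ (biproduct.π X j)) (add_zero i) =
    x.comp (mk₀ (biproduct.π X j)) (add_zero i)
  rw [comp_mk₀_comp_mk₀, biproduct.lift_π, hθ]

lemma exists_iso_comp_mk₀_eq {T'' : C} {ε : Ext M T' i} {η : Ext M T'' i}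
    (hεmin : ε.IsMinimal) (hηmin : η.IsMinimal)
    (hε : ε.IsUniversalFor T'') (hη : η.IsUniversalFor T') :
    ∃ φ : T' ≅ T'', ε.comp (mk₀ φ.hom) (add_zero i) = η := by
  obtain ⟨α, hα⟩ := hε η
  obtain ⟨β, hβ⟩ := hη ε
  have : IsIso (α ≫ β) := hεmin _ (by rw [← comp_mk₀_comp_mk₀, hα, hβ])
  have : IsIso (β ≫ α) := hηmin _ (by rw [← comp_mk₀_comp_mk₀, hβ, hα])
  have : IsIso α := isIso_of_isIso_comp_of_isIso_comp α β
  exact ⟨asIso α, hα⟩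

end CategoryTheory.Abelian.Ext

lemma CatInAdd.isUniversalFor {Λ : Type} [Ring Λ] {M T T' X : ModuleCat.{0} Λ} {i : ℕ}
    {ε : Ext M T' i} (hX : CatInAdd T X) (h : ε.IsUniversalFor T) : ε.IsUniversalFor X := by
  obtain ⟨k, ⟨r⟩⟩ := hX.exists_retract_biproduct
  exact (Ext.IsUniversalFor.biproduct (J := Fin k) fun _ => h).of_retract r

theorem minimal_universal_extension_unique_general
    (Λ : Type) [Ring Λ]
    (M T T' T'' : ModuleCat.{0} Λ)
    (hT' : CatInAdd T T') (hT'' : CatInAdd T T'')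
    (i : ℕ) (ε : Ext M T' i) (η : Ext M T'' i)
    (hεuniv : ∀ x : Ext M T i, ∃ θ : T' ⟶ T, ε.comp (Ext.mk₀ θ) (add_zero i) = x)
    (hεmin : ∀ θ : T' ⟶ T', ε.comp (Ext.mk₀ θ) (add_zero i) = ε → IsIso θ)
    (hηuniv : ∀ x : Ext M T i, ∃ θ : T'' ⟶ T, η.comp (Ext.mk₀ θ) (add_zero i) = x)
    (hηmin : ∀ θ : T'' ⟶ T'', η.comp (Ext.mk₀ θ) (add_zero i) = η → IsIso θ) :
    ∃ φ : T' ≅ T'', ε.comp (Ext.mk₀ φ.hom) (add_zero i) = η :=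
  Ext.exists_iso_comp_mk₀_eq hεmin hηmin (hT''.isUniversalFor hεuniv) (hT'.isUniversalFor hηuniv)

/-- Minimal universal `add T`-extensions are unique up to isomorphism:
if `ε ∈ Ext^i(M, T')` and `η ∈ Ext^i(M, T'')` are both minimal universal
`add T`-extensions of `M`, then there is an isomorphism `φ : T' ≅ T''`
with `φ · ε = η` (pushout of `ε` along `φ` equals `η`). -/
theorem minimal_universal_extension_unique
    (R Λ : Type) [CommRing R] [IsArtinianRing R] [Ring Λ] [Algebra R Λ]
    [Module.Finite R Λ]
    (M T T' T'' : ModuleCat.{0} Λ)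
    (hMfl : IsFiniteLength Λ M) (hTfl : IsFiniteLength Λ T)
    (hT' : CatInAdd T T') (hT'' : CatInAdd T T'')
    (i : ℕ) (ε : Ext M T' i) (η : Ext M T'' i)
    (hεuniv : ∀ x : Ext M T i, ∃ θ : T' ⟶ T, ε.comp (Ext.mk₀ θ) (add_zero i) = x)
    (hεmin : ∀ θ : T' ⟶ T', ε.comp (Ext.mk₀ θ) (add_zero i) = ε → IsIso θ)
    (hηuniv : ∀ x : Ext M T i, ∃ θ : T'' ⟶ T, η.comp (Ext.mk₀ θ) (add_zero i) = x)
    (hηmin : ∀ θ : T'' ⟶ T'', η.comp (Ext.mk₀ θ) (add_zero i) = η → IsIso θ) :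
    ∃ φ : T' ≅ T'', ε.comp (Ext.mk₀ φ.hom) (add_zero i) = η :=
  minimal_universal_extension_unique_general Λ M T T' T'' hT' hT'' i ε η hεuniv hεmin hηuniv hηmin
end

section
/- (Riedtmann–Schofield) Let Λ be a hereditary artin algebra, T and M finite length Λ-modules with M indecomposable and Ext^1(T,M) = 0. Let f: M → T' be a morphism with T' ∈ add(T), factored as M ↠ I ↪ T' through its image. If the epimorphism M ↠ I is proper (not an isomorphism), then the inclusion I ↪ T' is a split monomorphism. -/
/-- `X` is (isomorphic to) a direct summand of `M`. -/
def IsSummand (Λ : Type) [Ring Λ] (X M : Type) [AddCommGroup X] [Module Λ X]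
    [AddCommGroup M] [Module Λ M] : Prop :=
  ∃ (i : X →ₗ[Λ] M) (p : M →ₗ[Λ] X), p ∘ₗ i = LinearMap.id

/-- `X` belongs to `add T`, the additive subcategory generated by the
indecomposable direct summands of `T`. -/
def InAdd (Λ : Type) [Ring Λ] (T X : Type) [AddCommGroup T] [Module Λ T]
    [AddCommGroup X] [Module Λ X] : Prop :=
  ∃ n : ℕ, IsSummand Λ X (Fin n → T)

/-- `Ext¹_Λ(A, B) = 0`: every short exact sequence `0 → B → E → A → 0` splits. -/
def Ext1Zero (Λ : Type) [Ring Λ] (A B : Type) [AddCommGroup A] [Module Λ A]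
    [AddCommGroup B] [Module Λ B] : Prop :=
  ∀ (E : Type) [AddCommGroup E] [Module Λ E] (i : B →ₗ[Λ] E) (p : E →ₗ[Λ] A),
    Function.Injective i → Function.Surjective p → LinearMap.ker p = LinearMap.range i →
    ∃ r : E →ₗ[Λ] B, r ∘ₗ i = LinearMap.id

/-- An indecomposable module: nonzero, and admitting no nontrivial direct sum
decomposition. -/
def IsIndec (Λ : Type) [Ring Λ] (M : Type) [AddCommGroup M] [Module Λ M] : Prop :=
  (∃ m : M, m ≠ 0) ∧ ∀ N N' : Submodule Λ M, IsCompl N N' → N = ⊥ ∨ N' = ⊥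

/-- A hereditary ring: submodules of projective modules are projective. -/
def IsHereditaryRing (Λ : Type) [Ring Λ] : Prop :=
  ∀ (M : Type) [AddCommGroup M] [Module Λ M], Module.Projective Λ M →
    ∀ N : Submodule Λ M, Module.Projective Λ N

/-!
Write `U` for the image of `f`, `g : M ↠ U` for the corestriction of `f` and `u : U ↪ T'` for the
inclusion. Since `Λ` is hereditary, the extension `0 → U → T' → T'/U → 0` is the pushforward along
`g` of an extension `0 → M → X → T'/U → 0`. As `Ext¹(T', M) = 0` (`T'` lies in `add T`), the
projection `T' → T'/U` lifts to `γ : T' → X`, and comparing `γ` with the pushforward yields `r₀ : T' → U` and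
`k : U → M` with `r₀ ∘ u = 1 - g ∘ k`. By Fitting's lemma the endomorphism `k ∘ g` of the
indecomposable finite length module `M` is nilpotent or injective; it is not injective because `f`
is not, so `g ∘ k` is nilpotent as well, `1 - g ∘ k` is invertible, and `(1 - g ∘ k)⁻¹ ∘ r₀` is a
retraction of `u`.
-/

open LinearMap
open Function (Exact Injective Surjective)

variable {Λ : Type} [Ring Λ]

section

variable {K Q M : Type*} [AddCommMonoid K] [Module Λ K] [AddCommGroup Q] [Module Λ Q]
  [AddCommGroup M] [Module Λ M] (j : K →ₗ[Λ] Q) (φ : K →ₗ[Λ] M)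

abbrev Pushout : Type _ := (M × Q) ⧸ range (φ.prod (-j))

namespace Pushout

def inl : M →ₗ[Λ] Pushout j φ := (range (φ.prod (-j))).mkQ ∘ₗ LinearMap.inl Λ M Q

def inr : Q →ₗ[Λ] Pushout j φ := (range (φ.prod (-j))).mkQ ∘ₗ LinearMap.inr Λ M Q

theorem inl_comp_eq_inr_comp : inl j φ ∘ₗ φ = inr j φ ∘ₗ j := by
  ext k
  simp only [inl, inr, comp_apply, Submodule.mkQ_apply, coe_inl, coe_inr]
  rw [Submodule.Quotient.eq]
  exact ⟨k, by simp [sub_eq_add_neg]⟩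

theorem exists_inl_add_inr (x : Pushout j φ) : ∃ m q, inl j φ m + inr j φ q = x := by
  obtain ⟨⟨m, q⟩, rfl⟩ := Submodule.mkQ_surjective _ x
  refine ⟨m, q, ?_⟩
  simp only [inl, inr, comp_apply, coe_inl, coe_inr, ← map_add, Prod.mk_add_mk,
    add_zero, zero_add]

theorem hom_ext {E : Type*} [AddCommGroup E] [Module Λ E] {F G : Pushout j φ →ₗ[Λ] E}
    (hinl : F ∘ₗ inl j φ = G ∘ₗ inl j φ) (hinr : F ∘ₗ inr j φ = G ∘ₗ inr j φ) : F = G :=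
  Submodule.linearMap_qext _ (prod_ext hinl hinr)

section Desc

variable {E : Type*} [AddCommGroup E] [Module Λ E] (a : M →ₗ[Λ] E) (b : Q →ₗ[Λ] E)

def desc (h : a ∘ₗ φ = b ∘ₗ j) : Pushout j φ →ₗ[Λ] E :=
  (range (φ.prod (-j))).liftQ (a.coprod b) <| by
    rintro _ ⟨k, rfl⟩
    simpa [← sub_eq_add_neg, sub_eq_zero] using LinearMap.congr_fun h k

variable (h : a ∘ₗ φ = b ∘ₗ j)

@[simp]
theorem desc_comp_inl : desc j φ a b h ∘ₗ inl j φ = a := by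
  ext; simp [desc, inl]

@[simp]
theorem desc_comp_inr : desc j φ a b h ∘ₗ inr j φ = b := by
  ext; simp [desc, inr]

end Desc

theorem inl_injective (hj : Injective j) : Injective (inl j φ) := by
  refine (injective_iff_map_eq_zero _).mpr fun m hm => ?_
  obtain ⟨k, hk⟩ := (Submodule.Quotient.mk_eq_zero _).mp hm
  have hk0 : k = 0 := hj (by simpa using congrArg Prod.snd hk)
  simpa [hk0] using (congrArg Prod.fst hk).symm

theorem exact_inl_desc {C : Type*} [AddCommGroup C] [Module Λ C] {σ : Q →ₗ[Λ] C}
    (hjσ : Exact j σ) :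
    Exact (inl j φ) (desc j φ 0 σ (by rw [zero_comp, hjσ.linearMap_comp_eq_zero])) := by
  intro x
  obtain ⟨m, q, rfl⟩ := exists_inl_add_inr j φ x
  constructor
  · intro hx
    obtain ⟨k, rfl⟩ := (hjσ q).mp (by simpa [← comp_apply] using hx)
    refine ⟨m + φ k, ?_⟩
    rw [map_add, ← comp_apply (inr j φ), ← inl_comp_eq_inr_comp, comp_apply]
  · rintro ⟨m', hm'⟩
    rw [← hm', ← comp_apply, desc_comp_inl, LinearMap.zero_apply]

end Pushout

end

/-- `X` is the pushout of a free presentation `0 → K → Λ^(C) → C → 0` along a map `K → M`, which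
exists because `K` is projective. -/
theorem IsHereditaryRing.exists_extension (hH : IsHereditaryRing Λ) {M E C : Type}
    [AddCommGroup M] [Module Λ M] [AddCommGroup E] [Module Λ E] [AddCommGroup C] [Module Λ C]
    {v : M →ₗ[Λ] E} {π : E →ₗ[Λ] C} (hπ : Surjective π) (hvπ : Exact v π) :
    ∃ (X : Type) (_ : AddCommGroup X) (_ : Module Λ X) (ι : M →ₗ[Λ] X) (σ : X →ₗ[Λ] C)
      (β : X →ₗ[Λ] E), Injective ι ∧ Surjective σ ∧ Exact ι σ ∧ β ∘ₗ ι = v ∧ π ∘ₗ β = σ := by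
  let σ₀ : (C →₀ Λ) →ₗ[Λ] C := Finsupp.linearCombination Λ id
  have hσ₀surj : Surjective σ₀ := Finsupp.linearCombination_id_surjective Λ C
  let K := ker σ₀
  have : Module.Projective Λ K := hH _ inferInstance K
  obtain ⟨τ, hτ⟩ := Module.projective_lifting_property π σ₀ hπ
  have hτK : ∀ k : K, τ k ∈ range v := fun k => by
    rw [← hvπ.linearMap_ker_eq, mem_ker, ← comp_apply, hτ]
    exact k.2
  obtain ⟨φ, hφ⟩ := Module.projective_lifting_property v.rangeRestrict
    (codRestrict _ (τ ∘ₗ K.subtype) hτK) v.surjective_rangeRestrict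
  have hvφ : v ∘ₗ φ = τ ∘ₗ K.subtype := by
    ext k
    exact congrArg Subtype.val (LinearMap.congr_fun hφ k)
  have hσ₀K : 0 ∘ₗ φ = σ₀ ∘ₗ K.subtype := by
    rw [zero_comp, (exact_subtype_ker_map σ₀).linearMap_comp_eq_zero]
  refine ⟨Pushout K.subtype φ, inferInstance, inferInstance, Pushout.inl K.subtype φ,
    Pushout.desc K.subtype φ 0 σ₀ hσ₀K, Pushout.desc K.subtype φ v τ hvφ,
    Pushout.inl_injective _ _ K.injective_subtype, ?_,
    Pushout.exact_inl_desc K.subtype φ (exact_subtype_ker_map σ₀), Pushout.desc_comp_inl _ _ _ _ _,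
    ?_⟩
  · refine Surjective.of_comp (g := Pushout.inr K.subtype φ) ?_
    rwa [← coe_comp, Pushout.desc_comp_inr]
  · refine Pushout.hom_ext _ _ ?_ ?_
    · rw [comp_assoc, Pushout.desc_comp_inl, Pushout.desc_comp_inl, hvπ.linearMap_comp_eq_zero]
    · rw [comp_assoc, Pushout.desc_comp_inr, Pushout.desc_comp_inr, hτ]

theorem ext1Zero_iff_forall_exists_section {A B : Type} [AddCommGroup A] [Module Λ A]
    [AddCommGroup B] [Module Λ B] :
    Ext1Zero Λ A B ↔ ∀ (E : Type) [AddCommGroup E] [Module Λ E] (i : B →ₗ[Λ] E)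
      (p : E →ₗ[Λ] A), Injective i → Surjective p → Exact i p →
      ∃ s : A →ₗ[Λ] E, p ∘ₗ s = LinearMap.id := by
  constructor
  · intro h E _ _ i p hi hp hip
    obtain ⟨r, hr⟩ := h E i p hi hp hip.linearMap_ker_eq
    exact ((hip.split_tfae'.out 1 0 rfl rfl).mp ⟨hp, r, hr⟩).2
  · intro h E _ _ i p hi hp hker
    have hip : Exact i p := LinearMap.exact_iff.mpr hker
    obtain ⟨s, hs⟩ := h E i p hi hp hip
    exact ((hip.split_tfae'.out 0 1 rfl rfl).mp ⟨hi, s, hs⟩).2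

namespace Ext1Zero

variable {A B E C : Type} [AddCommGroup A] [Module Λ A] [AddCommGroup B] [Module Λ B]
  [AddCommGroup E] [Module Λ E] [AddCommGroup C] [Module Λ C]

theorem exists_lift (h : Ext1Zero Λ A B) {i : B →ₗ[Λ] E} {p : E →ₗ[Λ] C} (hi : Injective i)
    (hp : Surjective p) (hip : Exact i p) (φ : A →ₗ[Λ] C) :
    ∃ γ : A →ₗ[Λ] E, p ∘ₗ γ = φ := by
  let P := ker (p ∘ₗ fst Λ E A - φ ∘ₗ snd Λ E A)
  have hP (x : E × A) : x ∈ P ↔ p x.1 = φ x.2 := by simp [P, sub_eq_zero]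
  let i' : B →ₗ[Λ] P := codRestrict P (LinearMap.inl Λ E A ∘ₗ i) fun b =>
    (hP _).mpr (by simp [hip.apply_apply_eq_zero])
  let p' : P →ₗ[Λ] A := snd Λ E A ∘ₗ P.subtype
  have hi' : Injective i' := fun b b' hbb' => hi (congrArg (Prod.fst ∘ Subtype.val) hbb')
  have hp' : Surjective p' := fun a => by
    obtain ⟨e, he⟩ := hp (φ a)
    exact ⟨⟨(e, a), (hP _).mpr he⟩, rfl⟩
  have hi'p' : Exact i' p' := by
    rintro ⟨⟨e, a⟩, hea⟩
    refine ⟨fun (ha : a = 0) => ?_, ?_⟩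
    · subst ha
      obtain ⟨b, rfl⟩ := (hip e).mp (by simpa using (hP _).mp hea)
      exact ⟨b, rfl⟩
    · rintro ⟨b, hb⟩
      exact congrArg (Prod.snd ∘ Subtype.val) hb.symm
  obtain ⟨s, hs⟩ := (ext1Zero_iff_forall_exists_section.mp h) P i' p' hi' hp' hi'p'
  refine ⟨fst Λ E A ∘ₗ P.subtype ∘ₗ s, LinearMap.ext fun a => ?_⟩
  have hsa := (hP _).mp (s a).2
  rwa [show ((s a : P) : E × A).2 = a from LinearMap.congr_fun hs a] at hsa

theorem of_inAdd {T T' : Type} [AddCommGroup T] [Module Λ T] [AddCommGroup T'] [Module Λ T']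
    (h : Ext1Zero Λ T B) (hT' : InAdd Λ T T') : Ext1Zero Λ T' B := by
  obtain ⟨n, ι, ρ, hρι⟩ := hT'
  refine ext1Zero_iff_forall_exists_section.mpr fun E _ _ i p hi hp hip => ?_
  choose γ hγ using fun k : Fin n => h.exists_lift hi hp hip (ρ ∘ₗ single Λ (fun _ => T) k)
  refine ⟨(∑ k, γ k ∘ₗ proj k) ∘ₗ ι, LinearMap.ext fun t => ?_⟩
  calc p ((∑ k, γ k ∘ₗ proj k) (ι t)) = ρ (∑ k, Pi.single k (ι t k)) := by
        simp [map_sum, ← comp_apply, hγ]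
    _ = t := by rw [Finset.univ_sum_single, ← comp_apply, hρι, id_apply]

end Ext1Zero

theorem IsIndec.isNilpotent_or_injective {M : Type} [AddCommGroup M] [Module Λ M]
    [IsNoetherian Λ M] [IsArtinian Λ M] (hM : IsIndec Λ M) (ψ : Module.End Λ M) :
    IsNilpotent ψ ∨ Injective ψ := by
  obtain ⟨n, hn, hn0⟩ := (ψ.eventually_isCompl_ker_pow_range_pow.and
    (Filter.eventually_ne_atTop 0)).exists
  rcases hM.2 _ _ hn with hker | hrange
  · exact .inr (Module.End.injective_of_iterate_injective hn0 (ker_eq_bot.mp hker))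
  · exact .inl ⟨n, range_eq_bot.mp hrange⟩

section Nilpotent

variable {M N T : Type*} [AddCommGroup M] [Module Λ M] [AddCommGroup N] [Module Λ N]
  [AddCommGroup T] [Module Λ T]

theorem isNilpotent_comp_of_isNilpotent_comp {g : M →ₗ[Λ] N} {k : N →ₗ[Λ] M}
    (h : IsNilpotent (k ∘ₗ g)) : IsNilpotent (g ∘ₗ k) := by
  obtain ⟨n, hn⟩ := h
  have hpow (m : ℕ) : (g ∘ₗ k) ^ (m + 1) = g ∘ₗ ((k ∘ₗ g) ^ m) ∘ₗ k := by
    induction m with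
    | zero => rw [pow_zero, pow_one, Module.End.one_eq_id, id_comp]
    | succ m ih =>
      rw [pow_succ, ih, pow_succ, Module.End.mul_eq_comp, Module.End.mul_eq_comp]
      simp only [comp_assoc]
  exact ⟨n + 1, by rw [hpow, hn, zero_comp, comp_zero]⟩

theorem exists_comp_eq_id_of_comp_eq_id_sub {u : N →ₗ[Λ] T} {r₀ : T →ₗ[Λ] N} {g : M →ₗ[Λ] N}
    {k : N →ₗ[Λ] M} (h : r₀ ∘ₗ u = LinearMap.id - g ∘ₗ k) (hkg : IsNilpotent (k ∘ₗ g)) :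
    ∃ r : T →ₗ[Λ] N, r ∘ₗ u = LinearMap.id := by
  obtain ⟨e, he⟩ := (isNilpotent_comp_of_isNilpotent_comp hkg).isUnit_one_sub
  refine ⟨(e⁻¹ : (Module.End Λ N)ˣ) ∘ₗ r₀, ?_⟩
  rw [comp_assoc, h, ← Module.End.one_eq_id, ← he, ← Module.End.mul_eq_comp, Units.inv_mul]

end Nilpotent

theorem IsHereditaryRing.exists_comp_range_subtype_eq_id_sub (hH : IsHereditaryRing Λ)
    {M T : Type} [AddCommGroup M] [Module Λ M] [AddCommGroup T] [Module Λ T]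
    (f : M →ₗ[Λ] T) (hext : Ext1Zero Λ T M) :
    ∃ (r₀ : T →ₗ[Λ] range f) (k : range f →ₗ[Λ] M),
      r₀ ∘ₗ (range f).subtype = LinearMap.id - f.rangeRestrict ∘ₗ k := by
  obtain ⟨X, _, _, ι, σ, β, hι, hσ, hισ, hβι, hπβ⟩ :=
    hH.exists_extension (range f).mkQ_surjective (exact_map_mkQ_range f)
  obtain ⟨γ, hγ⟩ := hext.exists_lift hι hσ hισ (range f).mkQ
  have hr₀ (t : T) : t - β (γ t) ∈ range f := by
    rw [← Submodule.Quotient.mk_eq_zero, ← Submodule.mkQ_apply, map_sub, ← comp_apply _ β,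
      hπβ, ← comp_apply σ, hγ, sub_self]
  have hk (v : range f) : γ v ∈ range ι := by
    rw [← hισ.linearMap_ker_eq, mem_ker, ← comp_apply σ, hγ]
    exact (Submodule.Quotient.mk_eq_zero _).mpr v.2
  let k : range f →ₗ[Λ] M :=
    (LinearEquiv.ofInjective ι hι).symm ∘ₗ codRestrict _ (γ ∘ₗ (range f).subtype) hk
  have hιk (v : range f) : ι (k v) = γ v :=
    congrArg Subtype.val ((LinearEquiv.ofInjective ι hι).apply_symm_apply ⟨γ v, hk v⟩)
  refine ⟨codRestrict _ (LinearMap.id - β ∘ₗ γ) hr₀, k, LinearMap.ext fun v => Subtype.ext ?_⟩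
  simp [← hιk, ← comp_apply β ι, hβι]

theorem riedtmann_schofield_general (Λ : Type) [Ring Λ]
    (hH : IsHereditaryRing Λ)
    (T M T' : Type) [AddCommGroup T] [Module Λ T] [AddCommGroup M] [Module Λ M]
    [AddCommGroup T'] [Module Λ T']
    (hMfl : IsFiniteLength Λ M)
    (hM : IsIndec Λ M) (hext : Ext1Zero Λ T M) (hT' : InAdd Λ T T')
    (f : M →ₗ[Λ] T') (hproper : ¬ Function.Injective f) :
    ∃ r : T' →ₗ[Λ] LinearMap.range f,
      r ∘ₗ (LinearMap.range f).subtype = LinearMap.id := by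
  obtain ⟨_, _⟩ := isFiniteLength_iff_isNoetherian_isArtinian.mp hMfl
  obtain ⟨r₀, k, hr₀⟩ := hH.exists_comp_range_subtype_eq_id_sub f (hext.of_inAdd hT')
  refine exists_comp_eq_id_of_comp_eq_id_sub hr₀
    ((hM.isNilpotent_or_injective (k ∘ₗ f.rangeRestrict)).resolve_right fun hinj => ?_)
  exact hproper ((range f).injective_subtype.comp (Injective.of_comp hinj))

/-- **Riedtmann–Schofield.**  Over a hereditary artin algebra, if `M` is
indecomposable with `Ext¹(T, M) = 0` and `f : M → T'` (with `T' ∈ add T`) has a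
proper epimorphism onto its image, then the inclusion of the image into `T'`
is a split monomorphism. -/
theorem riedtmann_schofield (Λ : Type) [Ring Λ] [IsArtinianRing Λ]
    (hH : IsHereditaryRing Λ)
    (T M T' : Type) [AddCommGroup T] [Module Λ T] [AddCommGroup M] [Module Λ M]
    [AddCommGroup T'] [Module Λ T']
    (hTfl : IsFiniteLength Λ T) (hMfl : IsFiniteLength Λ M)
    (hM : IsIndec Λ M) (hext : Ext1Zero Λ T M) (hT' : InAdd Λ T T')
    (f : M →ₗ[Λ] T') (hproper : ¬ Function.Injective f) :
    ∃ r : T' →ₗ[Λ] LinearMap.range f,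
      r ∘ₗ (LinearMap.range f).subtype = LinearMap.id :=
  riedtmann_schofield_general Λ hH T M T' hMfl hM hext hT' f hproper
end

section
/- (Happel–Ringel) Let Λ be a hereditary artin algebra and T, M indecomposable finite length Λ-modules with Ext^1(T,M) = 0. Then every nonzero homomorphism f: M → T is either injective or surjective. In particular, if T is exceptional (indecomposable with Ext^1(T,T) = 0), then End(T) is a division ring. -/
/-!
Suppose `f : M → T` is neither injective nor surjective, and let `K = ker f ≠ 0`. Because `Λ` is
hereditary, the extension `0 → K → M → im f → 0` extends along `im f ⊆ T` to an extension
`0 → K → E → T → 0` with `M ⊆ E`: push a projective presentation of `T` out along a lift to `M` of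
its restriction to the (projective) preimage of `im f`. Since `Ext¹(T, M) = 0`, the inclusion
`K → M` extends to `ρ : E → M`. Then `ρ|_M` fixes `K` pointwise, so by Fitting's lemma it is an
automorphism of the indecomposable module `M`, and `M` is a direct summand of `E` containing `K`.
Its complement maps onto a complement of `im f` in `T`, contradicting indecomposability of `T`.
-/

open Function LinearMap

section Pushout

variable {R A B C X : Type*} [Ring R] [AddCommMonoid A] [Module R A] [AddCommGroup B] [Module R B]
  [AddCommGroup C] [Module R C] [AddCommGroup X] [Module R X]

abbrev LinearPushout (j : A →ₗ[R] B) (h : A →ₗ[R] C) : Type _ :=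
  (C × B) ⧸ range (h.prod (-j))

namespace LinearPushout

variable (j : A →ₗ[R] B) (h : A →ₗ[R] C)

def inl : C →ₗ[R] LinearPushout j h := (range (h.prod (-j))).mkQ ∘ₗ LinearMap.inl R C B

def inr : B →ₗ[R] LinearPushout j h := (range (h.prod (-j))).mkQ ∘ₗ LinearMap.inr R C B

theorem inl_comp : inl j h ∘ₗ h = inr j h ∘ₗ j := by
  ext a
  simp only [inl, inr, LinearMap.comp_apply, Submodule.mkQ_apply, LinearMap.inl_apply,
    LinearMap.inr_apply, Submodule.Quotient.eq]
  exact ⟨a, by simp⟩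

theorem inl_injective {j : A →ₗ[R] B} (hj : Injective j) : Injective (inl j h) := by
  rw [← ker_eq_bot, Submodule.eq_bot_iff]
  rintro c hc
  obtain ⟨a, ha⟩ := (Submodule.Quotient.mk_eq_zero _).mp hc
  have ha0 : a = 0 := hj (by simpa using congrArg Prod.snd ha)
  simpa [ha0] using (congrArg Prod.fst ha).symm

theorem exists_inl_add_inr (y : LinearPushout j h) : ∃ c b, inl j h c + inr j h b = y := by
  obtain ⟨⟨c, b⟩, rfl⟩ := Submodule.mkQ_surjective _ y
  exact ⟨c, b, by simp [inl, inr, ← Submodule.Quotient.mk_add]⟩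

variable {j h}

def desc (u : C →ₗ[R] X) (v : B →ₗ[R] X) (huv : u ∘ₗ h = v ∘ₗ j) : LinearPushout j h →ₗ[R] X :=
  (range (h.prod (-j))).liftQ (u.coprod v) <| by
    rintro _ ⟨a, rfl⟩
    simpa [← sub_eq_add_neg, sub_eq_zero] using LinearMap.congr_fun huv a

@[simp]
theorem desc_inl (u : C →ₗ[R] X) (v : B →ₗ[R] X) (huv : u ∘ₗ h = v ∘ₗ j) (c : C) :
    desc u v huv (inl j h c) = u c := by
  simp [desc, inl]

@[simp]
theorem desc_inr (u : C →ₗ[R] X) (v : B →ₗ[R] X) (huv : u ∘ₗ h = v ∘ₗ j) (b : B) :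
    desc u v huv (inr j h b) = v b := by
  simp [desc, inr]

end LinearPushout

end Pushout

theorem LinearMap.isCompl_range_ker_of_comp_eq_id {R M E : Type*} [Ring R] [AddCommGroup M]
    [Module R M] [AddCommGroup E] [Module R E] {g : M →ₗ[R] E} {s : E →ₗ[R] M}
    (hsg : s ∘ₗ g = LinearMap.id) : IsCompl (range g) (ker s) := by
  have hidem : IsIdempotentElem (g ∘ₗ s) := by
    change g ∘ₗ (s ∘ₗ g) ∘ₗ s = g ∘ₗ s
    rw [hsg, LinearMap.id_comp]
  have hs : range s = ⊤ :=
    range_eq_top.mpr fun m ↦ ⟨g m, by simpa using LinearMap.congr_fun hsg m⟩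
  have hg : ker g = ⊥ := ker_eq_bot_of_inverse hsg
  simpa [range_comp_of_range_eq_top g hs, ker_comp_of_ker_eq_bot s hg] using hidem.isCompl

theorem IsCompl.map_of_ker_le {R E T : Type*} [Ring R] [AddCommGroup E] [Module R E]
    [AddCommGroup T] [Module R T] {A B : Submodule R E} (hAB : IsCompl A B) {q : E →ₗ[R] T}
    (hq : Surjective q) (hker : ker q ≤ A) : IsCompl (A.map q) (B.map q) := by
  refine ⟨Submodule.disjoint_def.mpr ?_, codisjoint_iff.mpr ?_⟩
  · rintro _ ⟨a, ha, rfl⟩ ⟨b, hb, hqb⟩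
    have hab : b - a ∈ A := hker (by simp [hqb])
    have hb0 : b = 0 :=
      Submodule.disjoint_def.mp hAB.disjoint b (by simpa using add_mem hab ha) hb
    rw [← hqb, hb0, map_zero]
  · rw [← Submodule.map_sup, hAB.sup_eq_top, Submodule.map_top, range_eq_top.mpr hq]

section

variable {Λ : Type} [Ring Λ]

theorem Ext1Zero.exists_comp_eq {T M K E : Type} [AddCommGroup T] [Module Λ T]
    [AddCommGroup M] [Module Λ M] [AddCommGroup K] [Module Λ K] [AddCommGroup E] [Module Λ E]
    (hext : Ext1Zero Λ T M) {i : K →ₗ[Λ] E} {q : E →ₗ[Λ] T} (hi : Injective i)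
    (hq : Surjective q) (hiq : ker q = range i) (h : K →ₗ[Λ] M) :
    ∃ ρ : E →ₗ[Λ] M, ρ ∘ₗ i = h := by
  have hqi : (0 : M →ₗ[Λ] T) ∘ₗ h = q ∘ₗ i := by
    ext k
    simpa using (hiq.ge (mem_range_self i k)).symm
  set b := LinearPushout.desc 0 q hqi
  have hb : Surjective b := fun t ↦ by
    obtain ⟨e, rfl⟩ := hq t
    exact ⟨LinearPushout.inr i h e, by simp [b]⟩
  have hab : ker b = range (LinearPushout.inl i h) := by
    refine le_antisymm (fun y hy ↦ ?_) ?_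
    · obtain ⟨m, e, rfl⟩ := LinearPushout.exists_inl_add_inr i h y
      obtain ⟨k, rfl⟩ : e ∈ range i := hiq ▸ by simpa [b] using hy
      refine ⟨m + h k, ?_⟩
      rw [map_add, ← LinearMap.comp_apply (g := h) (f := LinearPushout.inl i h),
        LinearPushout.inl_comp, LinearMap.comp_apply]
    · rintro _ ⟨m, rfl⟩
      simp [b]
  obtain ⟨r, hr⟩ := hext _ _ b (LinearPushout.inl_injective h hi) hb hab
  refine ⟨r ∘ₗ LinearPushout.inr i h, ?_⟩
  rw [LinearMap.comp_assoc, ← LinearPushout.inl_comp, ← LinearMap.comp_assoc, hr,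
    LinearMap.id_comp]

theorem IsHereditaryRing.exists_extension_s3 {T M : Type} [AddCommGroup T] [Module Λ T]
    [AddCommGroup M] [Module Λ M] (hH : IsHereditaryRing Λ) (f : M →ₗ[Λ] T) :
    ∃ (E : Type) (_ : AddCommGroup E) (_ : Module Λ E) (g : M →ₗ[Λ] E) (q : E →ₗ[Λ] T),
      Injective g ∧ Surjective q ∧ q ∘ₗ g = f ∧ ker q = range (g ∘ₗ (ker f).subtype) := by
  set π := Finsupp.linearCombination Λ (id : T → T)
  have hπ : Surjective π := Finsupp.linearCombination_id_surjective Λ T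
  set P' := (range f).comap π
  have : Module.Projective Λ P' := hH _ inferInstance P'
  obtain ⟨l, hl⟩ := Module.projective_lifting_property f.rangeRestrict
    ((π.domRestrict P').codRestrict (range f) fun p ↦ p.2) f.surjective_rangeRestrict
  have hfl : f ∘ₗ l = π ∘ₗ P'.subtype := by
    ext p
    exact congrArg Subtype.val (LinearMap.congr_fun hl p)
  set g := LinearPushout.inl P'.subtype l
  set q := LinearPushout.desc f π hfl
  have hqg : q ∘ₗ g = f := by
    ext m
    simp [q, g]
  refine ⟨_, _, _, g, q, LinearPushout.inl_injective l P'.injective_subtype, fun t ↦ ?_, hqg,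
    le_antisymm (fun y hy ↦ ?_) ?_⟩
  · obtain ⟨p, rfl⟩ := hπ t
    exact ⟨LinearPushout.inr _ _ p, by simp [q]⟩
  · obtain ⟨m, p, rfl⟩ := LinearPushout.exists_inl_add_inr _ _ y
    have hy' : f m + π p = 0 := by simpa [q] using hy
    have hp : p ∈ P' := ⟨-m, by simp [eq_neg_of_add_eq_zero_right hy']⟩
    have hlp : LinearPushout.inr _ _ p = g (l ⟨p, hp⟩) :=
      (LinearMap.congr_fun (LinearPushout.inl_comp P'.subtype l) ⟨p, hp⟩).symm
    have hK : m + l ⟨p, hp⟩ ∈ ker f := by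
      rw [mem_ker, map_add, ← LinearMap.comp_apply f l, hfl]
      exact hy'
    exact ⟨⟨_, hK⟩, by simp [hlp, g]⟩
  · rintro _ ⟨⟨m, hm⟩, rfl⟩
    rw [mem_ker, ← LinearMap.comp_apply, ← LinearMap.comp_assoc, hqg]
    exact hm

theorem IsIndec.bijective_of_apply_eq_self {M : Type} [AddCommGroup M] [Module Λ M]
    (hM : IsIndec Λ M) (hMfl : IsFiniteLength Λ M) {t : Module.End Λ M} {x : M} (hx : x ≠ 0)
    (htx : t x = x) : Bijective t := by
  obtain ⟨_, _⟩ := isFiniteLength_iff_isNoetherian_isArtinian.mp hMfl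
  obtain ⟨n, hn⟩ :=
    (t.eventually_isCompl_ker_pow_range_pow.and (Filter.eventually_ne_atTop 0)).exists
  have htnx : (t ^ n) x = x := by
    rw [Module.End.coe_pow, iterate_fixed htx]
  rcases hM.2 _ _ hn.1 with hker | hrange
  · exact IsArtinian.bijective_of_injective_endomorphism t <|
      Module.End.injective_of_iterate_injective hn.2 (ker_eq_bot.mp hker)
  · exact absurd (hrange ▸ ⟨x, htnx⟩ : x ∈ (⊥ : Submodule Λ M)) hx

theorem IsHereditaryRing.injective_or_surjective {T M : Type} [AddCommGroup T] [Module Λ T]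
    [AddCommGroup M] [Module Λ M] (hH : IsHereditaryRing Λ) (hMfl : IsFiniteLength Λ M)
    (hT : IsIndec Λ T) (hM : IsIndec Λ M) (hext : Ext1Zero Λ T M) {f : M →ₗ[Λ] T} (hf : f ≠ 0) :
    Injective f ∨ Surjective f := by
  by_contra! ⟨hni, hns⟩
  obtain ⟨E, _, _, g, q, hg, hq, hqg, hker⟩ := hH.exists_extension_s3 f
  obtain ⟨ρ, hρ⟩ := hext.exists_comp_eq (i := g ∘ₗ (ker f).subtype)
    (hg.comp (ker f).injective_subtype) hq hker (ker f).subtype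
  obtain ⟨x, hx, hx0⟩ := (Submodule.ne_bot_iff _).mp (mt ker_eq_bot.mp hni)
  have hρg : Bijective (ρ ∘ₗ g) :=
    hM.bijective_of_apply_eq_self hMfl (x := x) hx0 (LinearMap.congr_fun hρ ⟨x, hx⟩)
  set s := ((LinearEquiv.ofBijective _ hρg).symm : M →ₗ[Λ] M) ∘ₗ ρ
  have hsg : s ∘ₗ g = LinearMap.id := by
    ext m
    exact (LinearEquiv.ofBijective _ hρg).symm_apply_apply m
  have hrange : (range g).map q = range f := by rw [← range_comp, hqg]
  have hcompl := (isCompl_range_ker_of_comp_eq_id hsg).map_of_ker_le hq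
    (hker.trans_le (range_comp_le_range _ _))
  rcases hT.2 _ _ hcompl with h | h
  · exact hf (range_eq_bot.mp (hrange ▸ h))
  · refine hns (range_eq_top.mp ?_)
    rw [← hrange, ← hcompl.sup_eq_top, h, sup_bot_eq]

end

theorem happel_ringel_general (Λ : Type) [Ring Λ]
    (hH : IsHereditaryRing Λ)
    (T M : Type) [AddCommGroup T] [Module Λ T] [AddCommGroup M] [Module Λ M]
    (hTfl : IsFiniteLength Λ T) (hMfl : IsFiniteLength Λ M)
    (hT : IsIndec Λ T) (hM : IsIndec Λ M) (hext : Ext1Zero Λ T M) :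
    (∀ f : M →ₗ[Λ] T, f ≠ 0 → Function.Injective f ∨ Function.Surjective f) ∧
    (Ext1Zero Λ T T → ∀ g : Module.End Λ T, g ≠ 0 → IsUnit g) := by
  refine ⟨fun f hf ↦ hH.injective_or_surjective hMfl hT hM hext hf, fun hTT g hg ↦ ?_⟩
  obtain ⟨_, _⟩ := isFiniteLength_iff_isNoetherian_isArtinian.mp hTfl
  rw [Module.End.isUnit_iff]
  rcases hH.injective_or_surjective hTfl hT hT hTT hg with h | h
  · exact IsArtinian.bijective_of_injective_endomorphism g h
  · exact ⟨IsNoetherian.injective_of_surjective_endomorphism g h, h⟩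

/-- **Happel–Ringel.**  Over a hereditary artin algebra, if `T`, `M` are
indecomposable with `Ext¹(T, M) = 0`, then every nonzero `f : M → T` is
injective or surjective.  In particular if `T` is exceptional then `End(T)`
is a division ring (every nonzero endomorphism is a unit). -/
theorem happel_ringel (Λ : Type) [Ring Λ] [IsArtinianRing Λ]
    (hH : IsHereditaryRing Λ)
    (T M : Type) [AddCommGroup T] [Module Λ T] [AddCommGroup M] [Module Λ M]
    (hTfl : IsFiniteLength Λ T) (hMfl : IsFiniteLength Λ M)
    (hT : IsIndec Λ T) (hM : IsIndec Λ M) (hext : Ext1Zero Λ T M) :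
    (∀ f : M →ₗ[Λ] T, f ≠ 0 → Function.Injective f ∨ Function.Surjective f) ∧
    (Ext1Zero Λ T T → ∀ g : Module.End Λ T, g ≠ 0 → IsUnit g) :=
  happel_ringel_general Λ hH T M hTfl hMfl hT hM hext
end

section
/- (Bongartz) Let Λ be a hereditary artin algebra and T a rigid Λ-module. Let 0 → Λ → E → T' → 0 be the universal add(T)-coextension of Λ (so that the connecting map Hom(T, T') → Ext^1(T, Λ) is surjective). Then T ⊕ E is a tilting module. -/
/-- A tilting module: rigid, with a length-one `add U`-coresolution
`0 → Λ → U^k → Q → 0` of the regular module, `Q ∈ add U`. -/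
def IsTiltingModule (Λ : Type) [Ring Λ] (U : Type) [AddCommGroup U] [Module Λ U] : Prop :=
  Ext1Zero Λ U U ∧ ∃ (k : ℕ) (f : Λ →ₗ[Λ] (Fin k → U)), Function.Injective f ∧
    InAdd Λ U ((Fin k → U) ⧸ LinearMap.range f)

open LinearMap

section ShortExact

variable {R A B F : Type} [Ring R] [AddCommGroup A] [Module R A] [AddCommGroup B] [Module R B]
  [AddCommGroup F] [Module R F]

structure IsShortExact (i : B →ₗ[R] F) (p : F →ₗ[R] A) : Prop where
  injective : Function.Injective i
  surjective : Function.Surjective p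
  exact : Function.Exact i p

theorem IsShortExact.exists_retraction_iff_exists_section {i : B →ₗ[R] F} {p : F →ₗ[R] A}
    (h : IsShortExact i p) :
    (∃ r : F →ₗ[R] B, r ∘ₗ i = LinearMap.id) ↔ ∃ s : A →ₗ[R] F, p ∘ₗ s = LinearMap.id :=
  (h.exact.split_tfae h.injective h.surjective).out 1 0

theorem ext1Zero_iff : Ext1Zero R A B ↔ ∀ (F : Type) [AddCommGroup F] [Module R F]
    (i : B →ₗ[R] F) (p : F →ₗ[R] A), IsShortExact i p → ∃ r : F →ₗ[R] B, r ∘ₗ i = LinearMap.id :=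
  forall₄_congr fun _ _ _ _ ↦ forall_congr' fun _ ↦ by
    simp only [← exact_iff]
    exact ⟨fun H h ↦ H h.injective h.surjective h.exact, fun H hi hp hex ↦ H ⟨hi, hp, hex⟩⟩

theorem ext1Zero_iff_exists_section : Ext1Zero R A B ↔ ∀ (F : Type) [AddCommGroup F] [Module R F]
    (i : B →ₗ[R] F) (p : F →ₗ[R] A), IsShortExact i p → ∃ s : A →ₗ[R] F, p ∘ₗ s = LinearMap.id := by
  simp only [ext1Zero_iff]
  exact forall₄_congr fun _ _ _ _ ↦ forall₂_congr fun _ h ↦ h.exists_retraction_iff_exists_section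

end ShortExact

section Ext1Zero

variable {R A A' B B' F : Type} [Ring R] [AddCommGroup A] [Module R A] [AddCommGroup A']
  [Module R A'] [AddCommGroup B] [Module R B] [AddCommGroup B'] [Module R B']
  [AddCommGroup F] [Module R F] {i : B →ₗ[R] F} {p : F →ₗ[R] A}

theorem Ext1Zero.exists_lift_s8 (hA' : Ext1Zero R A' B) (h : IsShortExact i p) (g : A' →ₗ[R] A) :
    ∃ t : A' →ₗ[R] F, p ∘ₗ t = g := by
  -- the pullback of `p` along `g`
  let G := ker (p.coprod (-g))
  have mem_G (z : F × A') : z ∈ G ↔ p z.1 = g z.2 := by simp [G, ← sub_eq_add_neg, sub_eq_zero]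
  let i' : B →ₗ[R] G := (inl R F A' ∘ₗ i).codRestrict G fun b ↦ by
    simp [mem_G, h.exact.apply_apply_eq_zero]
  let p' : G →ₗ[R] A' := snd R F A' ∘ₗ G.subtype
  have hG : IsShortExact i' p' := by
    refine ⟨fun b b' hbb' ↦ h.injective congr(($hbb' : F × A').1), fun a ↦ ?_, fun z ↦ ?_⟩
    · obtain ⟨x, hx⟩ := h.surjective (g a)
      exact ⟨⟨(x, a), (mem_G _).2 hx⟩, rfl⟩
    · refine ⟨fun hz ↦ ?_, by rintro ⟨b, rfl⟩; rfl⟩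
      have hz : (z : F × A').2 = 0 := hz
      obtain ⟨b, hb⟩ := (h.exact _).1 (by simpa [hz] using (mem_G z).1 z.2)
      exact ⟨b, Subtype.ext (Prod.ext hb hz.symm)⟩
  obtain ⟨s, hs⟩ := ext1Zero_iff_exists_section.1 hA' G i' p' hG
  refine ⟨fst R F A' ∘ₗ G.subtype ∘ₗ s, LinearMap.ext fun a ↦ ?_⟩
  have hsa : (s a : F × A').2 = a := congr($hs a)
  simpa [hsa] using (mem_G (s a)).1 (s a).2

theorem Ext1Zero.exists_extend (hB' : Ext1Zero R A B') (h : IsShortExact i p) (g : B →ₗ[R] B') :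
    ∃ t : F →ₗ[R] B', t ∘ₗ i = g := by
  -- the pushout of `i` along `g` is `(B' × F) ⧸ N`
  let N := range ((-g).prod i)
  have hN : N ≤ ker (p ∘ₗ snd R B' F) := by
    rintro _ ⟨b, rfl⟩
    simp [h.exact.apply_apply_eq_zero]
  have mk_eq (b' : B') (b : B) (x : F) : N.mkQ (b' + g b, x) = N.mkQ (b', x + i b) := by
    rw [Submodule.mkQ_apply, Submodule.mkQ_apply, Submodule.Quotient.eq]
    exact ⟨-b, by simp⟩
  let i' := N.mkQ ∘ₗ inl R B' F
  let p' := N.liftQ (p ∘ₗ snd R B' F) hN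
  have hN' : IsShortExact i' p' := by
    refine ⟨fun b b' hbb' ↦ ?_, fun a ↦ ?_, fun z ↦ ?_⟩
    · obtain ⟨c, hc⟩ : ((b, 0) - (b', 0) : B' × F) ∈ N := (Submodule.Quotient.eq N).1 hbb'
      have hc2 : i c = 0 := by simpa using congr(($hc).2)
      rw [h.injective (hc2.trans (map_zero i).symm)] at hc
      simpa [sub_eq_zero, eq_comm] using congr(($hc).1)
    · obtain ⟨x, rfl⟩ := h.surjective a
      exact ⟨N.mkQ (0, x), rfl⟩
    · obtain ⟨⟨b', x⟩, rfl⟩ := N.mkQ_surjective z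
      refine ⟨fun hz ↦ ?_, by rintro ⟨c, hc⟩; simp [← hc, p', i']⟩
      obtain ⟨b, rfl⟩ := (h.exact x).1 hz
      exact ⟨b' + g b, by simpa [i'] using mk_eq b' b 0⟩
  obtain ⟨r, hr⟩ := ext1Zero_iff.1 hB' _ i' p' hN'
  refine ⟨r ∘ₗ N.mkQ ∘ₗ inr R B' F, LinearMap.ext fun b ↦ ?_⟩
  have hrg : r (N.mkQ (g b, 0)) = g b := congr($hr (g b))
  have hmk : N.mkQ (g b, 0) = N.mkQ (0, i b) := by simpa using mk_eq 0 b 0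
  simpa [hmk] using hrg

end Ext1Zero

section Closure

variable {R A A' B B' C X : Type} [Ring R] [AddCommGroup A] [Module R A] [AddCommGroup A']
  [Module R A'] [AddCommGroup B] [Module R B] [AddCommGroup B'] [Module R B']
  [AddCommGroup C] [Module R C] [AddCommGroup X] [Module R X]

theorem ext1Zero_ring_left (B : Type) [AddCommGroup B] [Module R B] : Ext1Zero R R B :=
  ext1Zero_iff_exists_section.2 fun _ _ _ _ _ h ↦ by
    obtain ⟨x, hx⟩ := h.surjective 1
    exact ⟨toSpanSingleton R _ x, LinearMap.ext_ring (by simpa using hx)⟩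

theorem Ext1Zero.of_isShortExact_left {a : A →ₗ[R] B} {b : B →ₗ[R] C} (hab : IsShortExact a b)
    (hA : Ext1Zero R A X) (hC : Ext1Zero R C X) : Ext1Zero R B X := by
  refine ext1Zero_iff.2 fun F _ _ u q h ↦ ?_
  obtain ⟨t, ht⟩ := hA.exists_lift_s8 h a
  have hqt (x : A) : q (t x) = a x := congr($ht x)
  let S := range t
  let u' := S.mkQ ∘ₗ u
  let q' := S.liftQ (b ∘ₗ q) (by rintro _ ⟨x, rfl⟩; simp [hqt, hab.exact.apply_apply_eq_zero])
  have hS : IsShortExact u' q' := by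
    refine ⟨fun x y hxy ↦ ?_, fun c ↦ ?_, fun z ↦ ?_⟩
    · obtain ⟨α, hα⟩ : u x - u y ∈ S := (Submodule.Quotient.eq S).1 hxy
      have hα0 : a α = 0 := by rw [← hqt, hα, ← map_sub, h.exact.apply_apply_eq_zero]
      rw [hab.injective (hα0.trans (map_zero a).symm), map_zero, eq_comm, ← map_sub] at hα
      exact sub_eq_zero.1 (h.injective (hα.trans (map_zero u).symm))
    · obtain ⟨β, rfl⟩ := hab.surjective c
      obtain ⟨f, rfl⟩ := h.surjective β
      exact ⟨S.mkQ f, rfl⟩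
    · obtain ⟨f, rfl⟩ := S.mkQ_surjective z
      refine ⟨fun hz ↦ ?_, by rintro ⟨x, hx⟩; simp [← hx, u', q', h.exact.apply_apply_eq_zero]⟩
      obtain ⟨α, hα⟩ := (hab.exact (q f)).1 hz
      obtain ⟨x, hx⟩ := (h.exact (f - t α)).1 (by rw [map_sub, hqt, hα, sub_self])
      refine ⟨x, ?_⟩
      simp only [u', coe_comp, Function.comp_apply, hx, Submodule.mkQ_apply, Submodule.Quotient.eq]
      simp [S]
  obtain ⟨r, hr⟩ := ext1Zero_iff.1 hC _ u' q' hS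
  exact ⟨r ∘ₗ S.mkQ, by rw [comp_assoc]; exact hr⟩

theorem Ext1Zero.prod_left (hA : Ext1Zero R A X) (hA' : Ext1Zero R A' X) :
    Ext1Zero R (A × A') X :=
  Ext1Zero.of_isShortExact_left ⟨inl_injective, snd_surjective, Function.Exact.inl_snd⟩ hA hA'

theorem Ext1Zero.pi_left (hA : Ext1Zero R A B) (n : ℕ) : Ext1Zero R (Fin n → A) B :=
  ext1Zero_iff_exists_section.2 fun _ _ _ _ p h ↦ by
    choose t ht using fun k : Fin n ↦ hA.exists_lift_s8 h (single R (fun _ ↦ A) k)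
    have hpt (k : Fin n) (x : A) : p (t k x) = Pi.single k x := congr($(ht k) x)
    refine ⟨∑ k, t k ∘ₗ proj k, pi_ext fun k x ↦ ?_⟩
    simp [Pi.single_apply, apply_ite, hpt]

theorem Ext1Zero.of_isSummand_left (hA : Ext1Zero R A B) (hA' : IsSummand R A' A) :
    Ext1Zero R A' B := by
  obtain ⟨ι, π, hπι⟩ := hA'
  refine ext1Zero_iff_exists_section.2 fun _ _ _ _ p h ↦ ?_
  obtain ⟨t, ht⟩ := hA.exists_lift_s8 h π
  exact ⟨t ∘ₗ ι, by rw [← comp_assoc, ht, hπι]⟩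

theorem Ext1Zero.inAdd_left (hA : Ext1Zero R A B) (hA' : InAdd R A A') : Ext1Zero R A' B :=
  let ⟨n, hn⟩ := hA'
  (hA.pi_left n).of_isSummand_left hn

theorem Ext1Zero.prod_right (hB : Ext1Zero R A B) (hB' : Ext1Zero R A B') :
    Ext1Zero R A (B × B') :=
  ext1Zero_iff.2 fun _ _ _ i _ h ↦ by
    obtain ⟨t, ht⟩ := hB.exists_extend h (fst R B B')
    obtain ⟨t', ht'⟩ := hB'.exists_extend h (snd R B B')
    exact ⟨t.prod t', by rw [prod_comp, ht, ht', pair_fst_snd]⟩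

theorem Ext1Zero.pi_right (hB : Ext1Zero R A B) (n : ℕ) : Ext1Zero R A (Fin n → B) :=
  ext1Zero_iff.2 fun _ _ _ i _ h ↦ by
    choose t ht using fun k : Fin n ↦ hB.exists_extend h (proj k)
    exact ⟨pi t, by rw [pi_comp]; simp_rw [ht]; exact pi_proj⟩

theorem Ext1Zero.of_isSummand_right (hB : Ext1Zero R A B) (hB' : IsSummand R B' B) :
    Ext1Zero R A B' := by
  obtain ⟨ι, π, hπι⟩ := hB'
  refine ext1Zero_iff.2 fun _ _ _ i _ h ↦ ?_
  obtain ⟨t, ht⟩ := hB.exists_extend h ι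
  exact ⟨π ∘ₗ t, by rw [comp_assoc, ht, hπι]⟩

theorem Ext1Zero.inAdd_right (hB : Ext1Zero R A B) (hB' : InAdd R B B') : Ext1Zero R A B' :=
  let ⟨n, hn⟩ := hB'
  (hB.pi_right n).of_isSummand_right hn

end Closure

section AddCategory

variable {R U V X Y M N : Type} [Ring R] [AddCommGroup U] [Module R U] [AddCommGroup V]
  [Module R V] [AddCommGroup X] [Module R X] [AddCommGroup Y] [Module R Y] [AddCommGroup M]
  [Module R M] [AddCommGroup N] [Module R N]

theorem IsSummand.trans (hXM : IsSummand R X M) (hMN : IsSummand R M N) : IsSummand R X N := by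
  obtain ⟨ι, π, h⟩ := hXM
  obtain ⟨ι', π', h'⟩ := hMN
  exact ⟨ι' ∘ₗ ι, π ∘ₗ π', by rw [comp_assoc, ← comp_assoc ι, h', id_comp, h]⟩

theorem IsSummand.of_linearEquiv (e : X ≃ₗ[R] M) : IsSummand R X M :=
  ⟨e, e.symm, e.symm_comp⟩

theorem IsSummand.inl : IsSummand R X (X × Y) :=
  ⟨LinearMap.inl R X Y, fst R X Y, fst_comp_inl R X Y⟩

theorem IsSummand.prodMap (hXM : IsSummand R X M) (hYN : IsSummand R Y N) :
    IsSummand R (X × Y) (M × N) := by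
  obtain ⟨ι, π, h⟩ := hXM
  obtain ⟨ι', π', h'⟩ := hYN
  exact ⟨ι.prodMap ι', π.prodMap π', by rw [prodMap_comp, h, h', prodMap_id]⟩

theorem IsSummand.pi (h : IsSummand R X M) (n : ℕ) : IsSummand R (Fin n → X) (Fin n → M) := by
  obtain ⟨ι, π, h⟩ := h
  exact ⟨ι.compLeft _, π.compLeft _, LinearMap.ext fun v ↦ funext fun k ↦ congr($h (v k))⟩

theorem InAdd.self : InAdd R U U :=
  ⟨1, .of_linearEquiv (LinearEquiv.funUnique (Fin 1) R U).symm⟩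

theorem InAdd.of_isSummand (h : InAdd R U X) (hUV : IsSummand R U V) : InAdd R V X :=
  let ⟨n, hn⟩ := h
  ⟨n, hn.trans (hUV.pi n)⟩

theorem InAdd.of_linearEquiv (h : InAdd R U X) (e : X ≃ₗ[R] Y) : InAdd R U Y :=
  let ⟨n, hn⟩ := h
  ⟨n, (IsSummand.of_linearEquiv e.symm).trans hn⟩

theorem InAdd.prod (hX : InAdd R U X) (hY : InAdd R U Y) : InAdd R U (X × Y) := by
  obtain ⟨n, hn⟩ := hX
  obtain ⟨m, hm⟩ := hY
  let e : ((Fin n → U) × (Fin m → U)) ≃ₗ[R] (Fin (n + m) → U) :=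
    (LinearEquiv.sumArrowLequivProdArrow _ _ R U).symm.trans
      (LinearEquiv.funCongrLeft R U finSumFinEquiv.symm)
  exact ⟨n + m, (hn.prodMap hm).trans (.of_linearEquiv e)⟩

end AddCategory

theorem Function.Exact.exists_comp_eq_of_comp_eq_zero {R M N P Q : Type} [Ring R]
    [AddCommGroup M] [Module R M] [AddCommGroup N] [Module R N] [AddCommGroup P] [Module R P]
    [AddCommGroup Q] [Module R Q] {f : M →ₗ[R] N} {g : N →ₗ[R] P} (h : Function.Exact f g)
    (hg : Function.Surjective g) (θ : N →ₗ[R] Q) (hθ : θ ∘ₗ f = 0) :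
    ∃ σ : P →ₗ[R] Q, σ ∘ₗ g = θ :=
  ⟨(range f).liftQ θ (range_le_ker_iff.2 hθ) ∘ₗ (h.linearEquivOfSurjective hg).symm,
    LinearMap.ext fun x ↦ by simp⟩

section Bongartz

variable {R A B C E T T' : Type} [Ring R] [AddCommGroup A] [Module R A] [AddCommGroup B]
  [Module R B] [AddCommGroup C] [Module R C] [AddCommGroup E] [Module R E]
  [AddCommGroup T] [Module R T] [AddCommGroup T'] [Module R T']

theorem Ext1Zero.of_isShortExact_right {i : B →ₗ[R] E} {p : E →ₗ[R] C} (hip : IsShortExact i p)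
    (hC : Ext1Zero R A C)
    (hpush : ∀ (F : Type) [AddCommGroup F] [Module R F] (j : B →ₗ[R] F) (q : F →ₗ[R] A),
      IsShortExact j q → ∃ φ : F →ₗ[R] E, φ ∘ₗ j = i) :
    Ext1Zero R A E := by
  refine ext1Zero_iff_exists_section.2 fun F _ _ u q h ↦ ?_
  obtain ⟨t, ht⟩ := hC.exists_extend h p
  have htu (e : E) : t (u e) = p e := congr($ht e)
  let F₀ := ker t
  let j : B →ₗ[R] F₀ := (u ∘ₗ i).codRestrict F₀ fun b ↦
    mem_ker.2 ((htu _).trans (hip.exact.apply_apply_eq_zero b))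
  let q₀ := q ∘ₗ F₀.subtype
  have hjq₀ : IsShortExact j q₀ := by
    refine ⟨fun b b' hbb' ↦ hip.injective (h.injective congr(($hbb' : F))), fun a ↦ ?_,
      fun z ↦ ?_⟩
    · obtain ⟨x, rfl⟩ := h.surjective a
      obtain ⟨e, he⟩ := hip.surjective (t x)
      exact ⟨⟨x - u e, by simp [F₀, htu, he]⟩, by simp [q₀, h.exact.apply_apply_eq_zero]⟩
    · refine ⟨fun hz ↦ ?_, ?_⟩
      · obtain ⟨e, he⟩ := (h.exact z).1 hz
        obtain ⟨b, rfl⟩ := (hip.exact e).1 (by rw [← htu, he]; exact z.2)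
        exact ⟨b, Subtype.ext he⟩
      · rintro ⟨b, rfl⟩
        simp [q₀, j, h.exact.apply_apply_eq_zero]
  obtain ⟨φ, hφ⟩ := hpush F₀ j q₀ hjq₀
  obtain ⟨σ, hσ⟩ := hjq₀.exact.exists_comp_eq_of_comp_eq_zero hjq₀.surjective
    (F₀.subtype - u ∘ₗ φ) (LinearMap.ext fun b ↦ by
      change u (i b) - u (φ (j b)) = 0
      rw [show φ (j b) = i b from congr($hφ b), sub_self])
  refine ⟨σ, LinearMap.ext fun a ↦ ?_⟩
  obtain ⟨z, rfl⟩ := hjq₀.surjective a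
  change q (σ (q₀ z)) = q₀ z
  rw [show σ (q₀ z) = z - u (φ z) from congr($hσ z), map_sub, h.exact.apply_apply_eq_zero,
    sub_zero]
  rfl

theorem exists_addCoresolution_of_isShortExact {i : R →ₗ[R] E} {p : E →ₗ[R] T'}
    (h : IsShortExact i p) (hT' : InAdd R T T') :
    ∃ (k : ℕ) (f : R →ₗ[R] (Fin k → T × E)), Function.Injective f ∧
      InAdd R (T × E) ((Fin k → T × E) ⧸ range f) := by
  let e := LinearEquiv.funUnique (Fin 1) R (T × E)
  have hexact : Function.Exact (inr R T E ∘ₗ i) (LinearMap.id.prodMap p) := by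
    rintro ⟨x, y⟩
    simp only [Prod.ext_iff, coe_comp, Function.comp_apply, prodMap_apply, id_apply, inr_apply,
      Prod.fst_zero, Prod.snd_zero, Set.mem_range, h.exact y]
    exact ⟨fun ⟨hx, b, hb⟩ ↦ ⟨b, hx.symm, hb⟩, fun ⟨b, hx, hb⟩ ↦ ⟨hx.symm, b, hb⟩⟩
  have hsurj : Function.Surjective (LinearMap.id.prodMap p ∘ₗ e.toLinearMap) :=
    (Prod.map_surjective.2 ⟨Function.surjective_id, h.surjective⟩).comp e.surjective
  refine ⟨1, e.symm ∘ₗ inr R T E ∘ₗ i, e.symm.injective.comp (inr_injective.comp h.injective), ?_⟩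
  refine InAdd.of_linearEquiv ?_
    (((LinearEquiv.conj_symm_exact_iff_exact _ _ e).2 hexact).linearEquivOfSurjective hsurj).symm
  exact (InAdd.self.of_isSummand .inl).prod (hT'.of_isSummand .inl)

end Bongartz

theorem bongartz_completion_general (Λ : Type) [Ring Λ]
    (T E T' : Type) [AddCommGroup T] [Module Λ T] [AddCommGroup E] [Module Λ E]
    [AddCommGroup T'] [Module Λ T']
    (hrigid : Ext1Zero Λ T T) (hT' : InAdd Λ T T')
    (i : Λ →ₗ[Λ] E) (p : E →ₗ[Λ] T')
    (hi : Function.Injective i) (hp : Function.Surjective p)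
    (hexact : LinearMap.ker p = LinearMap.range i)
    (huniv : ∀ (F : Type) [AddCommGroup F] [Module Λ F] (j : Λ →ₗ[Λ] F) (q : F →ₗ[Λ] T),
      Function.Injective j → Function.Surjective q → LinearMap.ker q = LinearMap.range j →
      ∃ (h : T →ₗ[Λ] T') (φ : F →ₗ[Λ] E), φ ∘ₗ j = i ∧ p ∘ₗ φ = h ∘ₗ q) :
    IsTiltingModule Λ (T × E) := by
  have hip : IsShortExact i p := ⟨hi, hp, exact_iff.2 hexact⟩
  have hTE : Ext1Zero Λ T E := (hrigid.inAdd_right hT').of_isShortExact_right hip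
    fun F _ _ j q h ↦
      let ⟨_, φ, hφ, _⟩ := huniv F j q h.injective h.surjective h.exact.linearMap_ker_eq
      ⟨φ, hφ⟩
  have hET : Ext1Zero Λ E T :=
    .of_isShortExact_left hip (ext1Zero_ring_left T) (hrigid.inAdd_left hT')
  have hEE : Ext1Zero Λ E E :=
    .of_isShortExact_left hip (ext1Zero_ring_left E) (hTE.inAdd_left hT')
  exact ⟨(hrigid.prod_right hTE).prod_left (hET.prod_right hEE),
    exists_addCoresolution_of_isShortExact hip hT'⟩

/-- **Bongartz.**  Let `Λ` be a hereditary artin algebra, `T` rigid, and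
`0 → Λ → E → T' → 0` the universal `add T`-coextension of `Λ` (every
extension of `T` by `Λ` is a pullback of it along some `h : T → T'`).
Then `T ⊕ E` is a tilting module. -/
theorem bongartz_completion (Λ : Type) [Ring Λ] [IsArtinianRing Λ]
    (hH : IsHereditaryRing Λ)
    (T E T' : Type) [AddCommGroup T] [Module Λ T] [AddCommGroup E] [Module Λ E]
    [AddCommGroup T'] [Module Λ T']
    (hTfl : IsFiniteLength Λ T) (hrigid : Ext1Zero Λ T T) (hT' : InAdd Λ T T')
    (i : Λ →ₗ[Λ] E) (p : E →ₗ[Λ] T')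
    (hi : Function.Injective i) (hp : Function.Surjective p)
    (hexact : LinearMap.ker p = LinearMap.range i)
    (huniv : ∀ (F : Type) [AddCommGroup F] [Module Λ F] (j : Λ →ₗ[Λ] F) (q : F →ₗ[Λ] T),
      Function.Injective j → Function.Surjective q → LinearMap.ker q = LinearMap.range j →
      ∃ (h : T →ₗ[Λ] T') (φ : F →ₗ[Λ] E), φ ∘ₗ j = i ∧ p ∘ₗ φ = h ∘ₗ q) :
    IsTiltingModule Λ (T × E) :=
  bongartz_completion_general Λ T E T' hrigid hT' i p hi hp hexact huniv
end

section
/- Let Λ be a hereditary artin algebra, T a rigid module with Bongartz complement B (so T ⊕ B is the Bongartz completion to a tilting module). If M is any module with Ext^1(T,M) = 0, then Ext^1(B,M) = 0 and M is generated by T ⊕ B (i.e., M is a quotient of a finite direct sum of copies of T ⊕ B). -/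
/-!
The class of modules `X` with `Ext¹(X, M) = 0` contains the projectives and is closed under
extensions and under `add`. Hence `Ext¹(T', M) = 0` because `T' ∈ add T`, then `Ext¹(E, M) = 0`
because `E` is an extension of `T'` by `Λ`, and finally `Ext¹(B, M) = 0` because `B ∈ add E`.
The vanishing of `Ext¹(T', M)` also lets every map `Λ → M` extend along `Λ → E`, so `E` generates
`M`; as `E ∈ add (T ⊕ B)`, so does `T ⊕ B`.
-/

open LinearMap Function

variable {Λ : Type} [Ring Λ]

section Ext1Zero

variable {A X C K F M : Type} [AddCommGroup A] [Module Λ A] [AddCommGroup X] [Module Λ X]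
  [AddCommGroup C] [Module Λ C] [AddCommGroup K] [Module Λ K] [AddCommGroup F] [Module Λ F]
  [AddCommGroup M] [Module Λ M]

theorem Ext1Zero.exists_extend_s9 (hC : Ext1Zero Λ C M) {u : K →ₗ[Λ] F} {v : F →ₗ[Λ] C}
    (hu : Injective u) (hv : Surjective v) (huv : ker v = range u) (g : K →ₗ[Λ] M) :
    ∃ g' : F →ₗ[Λ] M, g' ∘ₗ u = g := by
  -- the pushout of `g` and `u` is an extension of `C` by `M`; a retraction of it gives `g'`
  let S : Submodule Λ (M × F) := range (g.prod (-u))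
  have hvS : S ≤ ker (v ∘ₗ snd Λ M F) := by
    rintro _ ⟨k, rfl⟩
    simpa using huv.ge ⟨k, rfl⟩
  let ι : M →ₗ[Λ] (M × F) ⧸ S := S.mkQ ∘ₗ inl Λ M F
  let π : (M × F) ⧸ S →ₗ[Λ] C := S.liftQ (v ∘ₗ snd Λ M F) hvS
  have hι_g : ∀ k, S.mkQ (0, u k) = ι (g k) := fun k =>
    (Submodule.Quotient.eq S).mpr ⟨-k, by simp⟩
  have hι : Injective ι := by
    refine (injective_iff_map_eq_zero ι).mpr fun m hm => ?_
    obtain ⟨k, hk⟩ := (Submodule.Quotient.mk_eq_zero S).mp hm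
    obtain ⟨hgk, huk⟩ := Prod.ext_iff.mp hk
    have hk0 : k = 0 := hu (by simpa using huk)
    simpa [hk0] using hgk.symm
  have hπ : Surjective π := fun c =>
    let ⟨f, hf⟩ := hv c
    ⟨S.mkQ (0, f), hf⟩
  have hπι : ker π = range ι := by
    refine le_antisymm (fun x hx => ?_) ?_
    · obtain ⟨⟨m, f⟩, rfl⟩ := S.mkQ_surjective x
      obtain ⟨k, rfl⟩ := huv.le (show v f = 0 from hx)
      refine ⟨m + g k, ?_⟩
      rw [map_add, ← hι_g]
      exact (map_add S.mkQ (m, 0) (0, u k)).symm.trans (by simp)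
    · rintro _ ⟨m, rfl⟩
      simp [π, ι]
  obtain ⟨r, hr⟩ := hC _ ι π hι hπ hπι
  refine ⟨r ∘ₗ S.mkQ ∘ₗ inr Λ M F, LinearMap.ext fun k => ?_⟩
  simpa [hι_g] using LinearMap.congr_fun hr (g k)

theorem Ext1Zero.of_projective [Module.Projective Λ X] : Ext1Zero Λ X M := by
  intro F _ _ j q hj hq hjq
  obtain ⟨s, hs⟩ := Module.projective_lifting_property q LinearMap.id hq
  have hexact : Exact j q := exact_iff.mpr hjq
  exact ⟨_, ((hexact.splitInjectiveEquiv hq).symm (hexact.splitSurjectiveEquiv hj ⟨s, hs⟩)).2⟩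

theorem Ext1Zero.of_exact (hA : Ext1Zero Λ A M) (hC : Ext1Zero Λ C M) {a : A →ₗ[Λ] X}
    {b : X →ₗ[Λ] C} (ha : Injective a) (hb : Surjective b) (hab : ker b = range a) :
    Ext1Zero Λ X M := by
  intro F _ _ j q hj hq hjq
  -- split `0 → M → N → A → 0` for `N = q⁻¹(range a)`, then extend the retraction to `F`
  let N : Submodule Λ F := ker (b ∘ₗ q)
  have hqj : ∀ m, q (j m) = 0 := fun m => hjq.ge ⟨m, rfl⟩
  have hqN : ∀ x : N, q x ∈ range a := fun x => hab.le x.2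
  let jN : M →ₗ[Λ] N := j.codRestrict N fun m => by simp [N, hqj]
  let qN : N →ₗ[Λ] A := (LinearEquiv.ofInjective a ha).symm.toLinearMap ∘ₗ
    (q ∘ₗ N.subtype).codRestrict (range a) hqN
  have ha_qN : ∀ x, a (qN x) = q x := fun x =>
    LinearEquiv.ofInjective_symm_apply (h := ha) a ⟨q x, hqN x⟩
  have hjN : Injective jN := fun m m' h => hj (congrArg Subtype.val h)
  have hqN_surj : Surjective qN := by
    intro y
    obtain ⟨f, hf⟩ := hq (a y)
    have hfN : f ∈ N := by simpa [N, hf] using hab.ge ⟨y, rfl⟩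
    exact ⟨⟨f, hfN⟩, ha (by rw [ha_qN, hf])⟩
  have hqN_jN : ker qN = range jN := by
    ext x
    rw [mem_ker, ← ha.eq_iff, ha_qN, map_zero, ← mem_ker, hjq]
    exact ⟨fun ⟨m, hm⟩ => ⟨m, Subtype.ext hm⟩, fun ⟨m, hm⟩ => ⟨m, congrArg Subtype.val hm⟩⟩
  obtain ⟨rN, hrN⟩ := hA N jN qN hjN hqN_surj hqN_jN
  obtain ⟨r, hr⟩ := hC.exists_extend_s9 N.injective_subtype (hb.comp hq)
    (Submodule.range_subtype N).symm rN
  exact ⟨r, LinearMap.ext fun m => (LinearMap.congr_fun hr (jN m)).trans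
    (LinearMap.congr_fun hrN m)⟩

theorem Ext1Zero.prod (hA : Ext1Zero Λ A M) (hC : Ext1Zero Λ C M) : Ext1Zero Λ (A × C) M :=
  hA.of_exact hC inl_injective snd_surjective (ker_snd Λ A C)

theorem Ext1Zero.of_isSummand (hA : Ext1Zero Λ A M) (hXA : IsSummand Λ X A) :
    Ext1Zero Λ X M := by
  obtain ⟨ι, ρ, hρι⟩ := hXA
  intro F _ _ j q hj hq hjq
  -- split the pullback of `0 → M → F → X → 0` along `ρ`, and restrict along `ι`
  let G : Submodule Λ (A × F) := ker (ρ ∘ₗ fst Λ A F - q ∘ₗ snd Λ A F)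
  have mem_G : ∀ x : A × F, x ∈ G ↔ ρ x.1 = q x.2 := fun x => sub_eq_zero
  have hqj : ∀ m, q (j m) = 0 := fun m => hjq.ge ⟨m, rfl⟩
  let jG : M →ₗ[Λ] G := (inr Λ A F ∘ₗ j).codRestrict G fun m => (mem_G _).mpr (by simp [hqj])
  let qG : G →ₗ[Λ] A := fst Λ A F ∘ₗ G.subtype
  let s : F →ₗ[Λ] G := ((ι ∘ₗ q).prod LinearMap.id).codRestrict G fun f =>
    (mem_G _).mpr (LinearMap.congr_fun hρι (q f))
  have hjG : Injective jG := fun m m' h => hj (congrArg (fun x : G => (x : A × F).2) h)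
  have hqG : Surjective qG := fun y =>
    let ⟨f, hf⟩ := hq (ρ y)
    ⟨⟨(y, f), (mem_G _).mpr hf.symm⟩, rfl⟩
  have hqG_jG : ker qG = range jG := by
    refine le_antisymm (fun x hx => ?_) ?_
    · have hx1 : (x : A × F).1 = 0 := hx
      have hx2 : q (x : A × F).2 = 0 := by rw [← (mem_G _).mp x.2, hx1, map_zero]
      obtain ⟨m, hm⟩ := hjq.le hx2
      exact ⟨m, Subtype.ext (Prod.ext hx1.symm hm)⟩
    · rintro _ ⟨m, rfl⟩
      rfl
  obtain ⟨r, hr⟩ := hA G jG qG hjG hqG hqG_jG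
  have hs_j : s ∘ₗ j = jG := by
    ext m
    · simp [s, jG, hqj]
    · rfl
  exact ⟨r ∘ₗ s, by rw [LinearMap.comp_assoc, hs_j, hr]⟩

theorem Ext1Zero.pi (hA : Ext1Zero Λ A M) (n : ℕ) : Ext1Zero Λ (Fin n → A) M := by
  induction n with
  | zero => exact hA.of_isSummand ⟨0, 0, Subsingleton.elim _ _⟩
  | succ n ih =>
    let e := Fin.consLinearEquiv Λ fun _ : Fin (n + 1) => A
    exact (hA.prod ih).of_isSummand ⟨e.symm, e, e.comp_symm⟩

theorem Ext1Zero.of_inAdd_s9 (hA : Ext1Zero Λ A M) (hX : InAdd Λ A X) : Ext1Zero Λ X M :=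
  let ⟨n, hXn⟩ := hX
  (hA.pi n).of_isSummand hXn

end Ext1Zero

def Generates (Λ : Type) [Ring Λ] (X M : Type) [AddCommGroup X] [Module Λ X]
    [AddCommGroup M] [Module Λ M] : Prop :=
  ∃ (k : ℕ) (q : (Fin k → X) →ₗ[Λ] M), Surjective q

section Generates

variable {X Y M : Type} [AddCommGroup X] [Module Λ X] [AddCommGroup Y] [Module Λ Y]
  [AddCommGroup M] [Module Λ M]

theorem Generates.of_forall_mem_range [Module.Finite Λ M]
    (h : ∀ m : M, ∃ g : X →ₗ[Λ] M, m ∈ range g) : Generates Λ X M := by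
  obtain ⟨n, s, hs⟩ := Module.Finite.exists_fin (R := Λ) (M := M)
  choose g x hgx using fun k => h (s k)
  refine ⟨n, ∑ k, g k ∘ₗ proj k, range_eq_top.mp (eq_top_iff.mpr ?_)⟩
  rw [← hs, Submodule.span_le]
  rintro _ ⟨k, rfl⟩
  refine ⟨Pi.single k (x k), ?_⟩
  simp [Pi.single_apply, apply_ite, hgx]

theorem Generates.of_inAdd_s9 (h : InAdd Λ Y X) : Generates Λ Y X :=
  let ⟨n, _, ρ, hρι⟩ := h
  ⟨n, ρ, LeftInverse.surjective (LinearMap.congr_fun hρι)⟩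

theorem Generates.trans (hYX : Generates Λ Y X) (hXM : Generates Λ X M) : Generates Λ Y M := by
  obtain ⟨n, p, hp⟩ := hYX
  obtain ⟨k, q, hq⟩ := hXM
  let e := (LinearEquiv.funCongrLeft Λ Y finProdFinEquiv).trans
    (LinearEquiv.curry Λ Y (Fin k) (Fin n))
  exact ⟨k * n, q ∘ₗ p.compLeft (Fin k) ∘ₗ e.toLinearMap, hq.comp (hp.comp_left.comp e.surjective)⟩

end Generates

theorem bongartz_complement_generates_general (Λ : Type) [Ring Λ]
    (T E T' B M : Type) [AddCommGroup T] [Module Λ T] [AddCommGroup E] [Module Λ E]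
    [AddCommGroup T'] [Module Λ T'] [AddCommGroup B] [Module Λ B]
    [AddCommGroup M] [Module Λ M]
    (hMfl : IsFiniteLength Λ M)
    (hT' : InAdd Λ T T')
    (i : Λ →ₗ[Λ] E) (p : E →ₗ[Λ] T')
    (hi : Function.Injective i) (hp : Function.Surjective p)
    (hexact : LinearMap.ker p = LinearMap.range i)
    (hB1 : InAdd Λ E B) (hB2 : InAdd Λ (T × B) E)
    (hM : Ext1Zero Λ T M) :
    Ext1Zero Λ B M ∧
    ∃ (k : ℕ) (q : (Fin k → T × B) →ₗ[Λ] M), Function.Surjective q := by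
  have hT'M : Ext1Zero Λ T' M := hM.of_inAdd_s9 hT'
  have hEM : Ext1Zero Λ E M := Ext1Zero.of_projective.of_exact hT'M hi hp hexact
  refine ⟨hEM.of_inAdd_s9 hB1, (Generates.of_inAdd_s9 hB2).trans ?_⟩
  have : IsNoetherian Λ M := (isFiniteLength_iff_isNoetherian_isArtinian.mp hMfl).1
  refine Generates.of_forall_mem_range fun m => ?_
  obtain ⟨g, hg⟩ := hT'M.exists_extend_s9 hi hp hexact (LinearMap.toSpanSingleton Λ M m)
  exact ⟨g, i 1, by simpa using LinearMap.congr_fun hg 1⟩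

/-- Let `T` be rigid over a hereditary artin algebra with Bongartz complement
`B` (so `B ∈ add E` and `E ∈ add(T ⊕ B)` for the universal `add T`-coextension
`0 → Λ → E → T' → 0` of `Λ`).  If `Ext¹(T, M) = 0` then `Ext¹(B, M) = 0` and
`M` is generated by `T ⊕ B`. -/
theorem bongartz_complement_generates (Λ : Type) [Ring Λ] [IsArtinianRing Λ]
    (hH : IsHereditaryRing Λ)
    (T E T' B M : Type) [AddCommGroup T] [Module Λ T] [AddCommGroup E] [Module Λ E]
    [AddCommGroup T'] [Module Λ T'] [AddCommGroup B] [Module Λ B]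
    [AddCommGroup M] [Module Λ M]
    (hTfl : IsFiniteLength Λ T) (hMfl : IsFiniteLength Λ M)
    (hrigid : Ext1Zero Λ T T) (hT' : InAdd Λ T T')
    (i : Λ →ₗ[Λ] E) (p : E →ₗ[Λ] T')
    (hi : Function.Injective i) (hp : Function.Surjective p)
    (hexact : LinearMap.ker p = LinearMap.range i)
    (huniv : ∀ (F : Type) [AddCommGroup F] [Module Λ F] (j : Λ →ₗ[Λ] F) (q : F →ₗ[Λ] T),
      Function.Injective j → Function.Surjective q → LinearMap.ker q = LinearMap.range j →
      ∃ (h : T →ₗ[Λ] T') (φ : F →ₗ[Λ] E), φ ∘ₗ j = i ∧ p ∘ₗ φ = h ∘ₗ q)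
    (hB1 : InAdd Λ E B) (hB2 : InAdd Λ (T × B) E)
    (hM : Ext1Zero Λ T M) :
    Ext1Zero Λ B M ∧
    ∃ (k : ℕ) (q : (Fin k → T × B) →ₗ[Λ] M), Function.Surjective q :=
  bongartz_complement_generates_general Λ T E T' B M hMfl hT' i p hi hp hexact hB1 hB2 hM
end

section
/- Let r, s be positive integers with rs ≥ 4, and let (a_t)_{t≥0}, (b_t)_{t≥0} be sequences of positive reals satisfying a_t = s·b_t − a_{t−1} for t ≥ 1 and b_{t+1} = r·a_t − b_t for t ≥ 0, with initial condition b_0·√s < a_0·√r. Then for all t ≥ 0: b_t·√s < a_t·√r < b_{t+1}·√s. -/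
/-!
Put `x = a t * √r` and `y = b t * √s`. Both recurrences take the form `y' = √(rs) * x - y`,
so `y' - x = (√(rs) - 2) * x + (x - y)`, which is positive as soon as `x - y` is,
because `√(rs) ≥ 2`. Alternating the two recurrences propagates the inequality along the chain
`b 0 * √s < a 0 * √r < b 1 * √s < a 1 * √r < ⋯`.
-/

lemma two_le_sqrt_mul_sqrt {u v : ℝ} (hu : 0 ≤ u) (huv : 4 ≤ u * v) : 2 ≤ √u * √v := by
  rw [← Real.sqrt_mul hu, show (2 : ℝ) = √4 by norm_num [show (4 : ℝ) = 2 ^ 2 by norm_num]]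
  exact Real.sqrt_le_sqrt huv

lemma mul_sqrt_lt_mul_sub_mul_sqrt {u v x y : ℝ} (hu : 0 ≤ u) (huv : 4 ≤ u * v) (hx : 0 ≤ x)
    (h : y * √v < x * √u) : x * √u < (u * x - y) * √v := by
  have hsqrt : 2 ≤ √u * √v := two_le_sqrt_mul_sqrt hu huv
  have hxu : 0 ≤ x * √u := mul_nonneg hx (Real.sqrt_nonneg u)
  calc x * √u ≤ x * √u * (√u * √v - 1) := by nlinarith
    _ = u * x * √v - x * √u := by linear_combination x * √v * Real.mul_self_sqrt hu
    _ < (u * x - y) * √v := by linarith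

theorem rank_two_total_order_general (r s : ℕ) (hrs : 4 ≤ r * s)
    (a b : ℕ → ℝ) (ha : ∀ t, 0 < a t) (hb : ∀ t, 0 < b t)
    (hrec1 : ∀ t, a (t + 1) = s * b (t + 1) - a t)
    (hrec2 : ∀ t, b (t + 1) = r * a t - b t)
    (h0 : b 0 * Real.sqrt s < a 0 * Real.sqrt r) :
    ∀ t, b t * Real.sqrt s < a t * Real.sqrt r ∧
      a t * Real.sqrt r < b (t + 1) * Real.sqrt s := by
  have hrs' : (4 : ℝ) ≤ r * s := by exact_mod_cast hrs
  have hsr' : (4 : ℝ) ≤ s * r := by rwa [mul_comm]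
  have step_b (t : ℕ) (h : b t * √s < a t * √r) : a t * √r < b (t + 1) * √s := by
    rw [hrec2]
    exact mul_sqrt_lt_mul_sub_mul_sqrt (Nat.cast_nonneg r) hrs' (ha t).le h
  have step_a (t : ℕ) (h : a t * √r < b (t + 1) * √s) :
      b (t + 1) * √s < a (t + 1) * √r := by
    rw [hrec1]
    exact mul_sqrt_lt_mul_sub_mul_sqrt (Nat.cast_nonneg s) hsr' (hb (t + 1)).le h
  intro t
  induction t with
  | zero => exact ⟨h0, step_b 0 h0⟩
  | succ t ih => exact ⟨step_a t ih.2, step_b (t + 1) (step_a t ih.2)⟩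

/-- The numerical core of the total-order theorem for rank-2
representation-infinite hereditary artin algebras: with `r*s ≥ 4`, positive
sequences satisfying the Auslander–Reiten recurrences
`a t = s * b t - a (t-1)` and `b (t+1) = r * a t - b t`, and the initial
inequality `b 0 * √s < a 0 * √r`, satisfy
`b t * √s < a t * √r < b (t+1) * √s` for all `t`. -/
theorem rank_two_total_order (r s : ℕ) (hr : 1 ≤ r) (hs : 1 ≤ s) (hrs : 4 ≤ r * s)
    (a b : ℕ → ℝ) (ha : ∀ t, 0 < a t) (hb : ∀ t, 0 < b t)
    (hrec1 : ∀ t, a (t + 1) = s * b (t + 1) - a t)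
    (hrec2 : ∀ t, b (t + 1) = r * a t - b t)
    (h0 : b 0 * Real.sqrt s < a 0 * Real.sqrt r) :
    ∀ t, b t * Real.sqrt s < a t * Real.sqrt r ∧
      a t * Real.sqrt r < b (t + 1) * Real.sqrt s :=
  rank_two_total_order_general r s hrs a b ha hb hrec1 hrec2 h0
end

section
/- Let r, s be positive integers and a, b, c positive reals satisfying b + c = r·a (or dually a relation with s), with rs ≥ 4 and b·√s < a·√r. Then a·√r < c·√s. More precisely: if b√s < a√r and c = r·a − b, then assuming c√s ≤ a√r leads to the contradiction 2(b + c) = 2ra > (b+c)√(rs) ≥ 2(b+c); hence a√r < c√s. -/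
/-! Multiplying both inequalities by `x = √r` turns `b√s < a√r` and the negated conclusion
`c√s ≤ a√r` into `b√(rs) < ra` and `c√(rs) ≤ ra`; their sum `(b + c)√(rs) < 2ra = 2(b + c)`
contradicts `√(rs) ≥ 2`. -/

theorem mul_lt_mul_of_add_eq_sq_mul {x y a b c : ℝ} (hx : 0 < x) (hxy : 2 ≤ x * y)
    (ha : 0 ≤ a) (hbc : b + c = x ^ 2 * a) (h : b * y < a * x) : a * x < c * y := by
  by_contra! h'
  have hb : b * (x * y) < a * x ^ 2 := by nlinarith [mul_lt_mul_of_pos_left h hx]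
  have hc : c * (x * y) ≤ a * x ^ 2 := by nlinarith [mul_le_mul_of_nonneg_left h' hx.le]
  have hsum : 0 ≤ b + c := hbc ▸ by positivity
  nlinarith [mul_le_mul_of_nonneg_left hxy hsum]

theorem two_le_sqrt_mul_sqrt_s16 {r s : ℝ} (hr : 0 ≤ r) (hrs : 4 ≤ r * s) :
    2 ≤ Real.sqrt r * Real.sqrt s := by
  rw [← Real.sqrt_mul hr, show (2 : ℝ) = Real.sqrt 4 by norm_num]
  exact Real.sqrt_le_sqrt hrs

theorem rank_two_inductive_step_general (r s : ℕ) (hrs : 4 ≤ r * s)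
    (a b c : ℝ) (ha : 0 < a)
    (hcab : c = r * a - b) (h : b * Real.sqrt s < a * Real.sqrt r) :
    a * Real.sqrt r < c * Real.sqrt s := by
  have hrs' : (4 : ℝ) ≤ r * s := by exact_mod_cast hrs
  have hr : 0 < Real.sqrt r := Real.sqrt_pos.mpr <| Nat.cast_pos.mpr <|
    Nat.pos_of_ne_zero fun hr0 => by simp [hr0] at hrs
  refine mul_lt_mul_of_add_eq_sq_mul hr (two_le_sqrt_mul_sqrt_s16 r.cast_nonneg hrs') ha.le ?_ h
  rw [Real.sq_sqrt r.cast_nonneg, hcab]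
  ring

/-- The inductive step in ordering the preprojective modules of a rank-2
representation-infinite hereditary algebra: if `r*s ≥ 4`, `c = r*a - b` and
`b*√s < a*√r` (with `a, b, c > 0`), then `a*√r < c*√s`. -/
theorem rank_two_inductive_step (r s : ℕ) (hr : 1 ≤ r) (hs : 1 ≤ s) (hrs : 4 ≤ r * s)
    (a b c : ℝ) (ha : 0 < a) (hb : 0 < b) (hc : 0 < c)
    (hcab : c = r * a - b) (h : b * Real.sqrt s < a * Real.sqrt r) :
    a * Real.sqrt r < c * Real.sqrt s :=
  rank_two_inductive_step_general r s hrs a b c ha hcab h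
end

section
/- Let Λ be a connected representation-infinite hereditary artin algebra of rank 2, with Euler form matrix [[u, −m],[0, v]] where m = r·u = s·v and rs ≥ 4. Define sequences of dimension vectors by the reflection/AR-recurrences: d(1,t) = s·d(2,t) − d(1,t−1) and d(2,t+1) = r·d(1,t) − d(2,t), with d(2,0), d(1,0) the dimension vectors of the simple projective and the other projective. Then all terms d(1,t), d(2,t) are positive (have positive length) for all t ≥ 0, and the sequence of lengths ℓ(d(2,0)), ℓ(d(1,0)), ℓ(d(2,1)), ℓ(d(1,1)), … normalized by dividing by √u or √v respectively, is strictly increasing. -/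
/-!
After dividing the lengths by `√u` and `√v`, both reflection recurrences become the single
recurrence `x_{n+2} = c x_{n+1} - x_n` with `c = √(rs) ≥ 2`, because `r √u / √v = √(rs)` and
`s √v / √u = √(rs)` by `ru = sv`. For `c ≥ 2` such a sequence keeps increasing once it starts
with `0 < x_0 < x_1`, since `c x_{n+1} - x_n - x_{n+1} ≥ x_{n+1} - x_n`.
-/

section Recurrence

variable {α : Type*} [CommRing α] [LinearOrder α] [IsStrictOrderedRing α]

theorem lt_mul_sub_of_two_le {c x y : α} (hc : 2 ≤ c) (hx : 0 < x) (hxy : x < y) :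
    y < c * y - x := by
  nlinarith [mul_nonneg (sub_nonneg.mpr hc) (hx.trans hxy).le]

theorem interleaved_recurrence_pos_lt {c : α} (hc : 2 ≤ c) {a b : ℕ → α}
    (ha : ∀ t, a (t + 1) = c * b t - a t) (hb : ∀ t, b (t + 1) = c * a (t + 1) - b t)
    (ha0 : 0 < a 0) (hab0 : a 0 < b 0) :
    ∀ t, 0 < a t ∧ a t < b t ∧ b t < a (t + 1) := by
  have step_a : ∀ t, 0 < a t → a t < b t → b t < a (t + 1) := fun t h₀ h₁ =>
    ha t ▸ lt_mul_sub_of_two_le hc h₀ h₁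
  intro t
  induction t with
  | zero => exact ⟨ha0, hab0, step_a 0 ha0 hab0⟩
  | succ t ih =>
    obtain ⟨hpos, hab, hba⟩ := ih
    have hpos' : 0 < a (t + 1) := hpos.trans (hab.trans hba)
    have hab' : a (t + 1) < b (t + 1) :=
      hb t ▸ lt_mul_sub_of_two_le hc (hpos.trans hab) hba
    exact ⟨hpos', hab', step_a (t + 1) hpos' hab'⟩

end Recurrence

theorem mul_sqrt_div_sqrt_eq_sqrt_mul {r s u v : ℝ} (hr : 0 ≤ r) (hs : 0 ≤ s) (hv : 0 < v)
    (h : r * u = s * v) : r * √u / √v = √(r * s) := by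
  have hr_sqrt : r * √u = √(r * r * u) := by
    rw [Real.sqrt_mul (mul_self_nonneg r), Real.sqrt_mul_self hr]
  rw [div_eq_iff (Real.sqrt_pos.mpr hv).ne', hr_sqrt, ← Real.sqrt_mul (mul_nonneg hr hs)]
  congr 1
  linear_combination r * h

def dimLength (l1 l2 : ℝ) : ℤ × ℤ →+ ℝ where
  toFun d := d.1 * l1 + d.2 * l2
  map_zero' := by simp
  map_add' d e := by simp only [Prod.fst_add, Prod.snd_add, Int.cast_add]; ring

theorem dimLength_apply (l1 l2 : ℝ) (d : ℤ × ℤ) : dimLength l1 l2 d = d.1 * l1 + d.2 * l2 :=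
  rfl

theorem dimLength_zsmul_sub_div {l1 l2 p q c : ℝ} {k : ℤ} (hp : p ≠ 0) (hc : k * p / q = c)
    (d e : ℤ × ℤ) :
    dimLength l1 l2 (k • d - e) / q = c * (dimLength l1 l2 d / p) - dimLength l1 l2 e / q := by
  rw [map_sub, map_zsmul, zsmul_eq_mul, ← hc]
  field_simp

/-- For a connected representation-infinite rank-2 hereditary artin algebra
with Euler form `[[u, -m], [0, v]]`, `m = r*u = s*v`, `r*s ≥ 4`, the dimension
vectors of the preprojective modules, defined by the reflection recurrences
from `d(2,0) = dim S(2)` and `d(1,0) = dim P(1)`, have positive length for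
every positive additive function `L`, and the lengths normalized by `√u`,
`√v` form a strictly increasing sequence. -/
theorem preprojective_dimension_vectors_increasing
    (u v m r s : ℕ) (hu : 0 < u) (hv : 0 < v)
    (hm1 : m = r * u) (hm2 : m = s * v) (hrs : 4 ≤ r * s)
    (d1 d2 : ℕ → ℤ × ℤ)
    (h20 : d2 0 = (0, 1)) (h10 : d1 0 = (1, (s : ℤ)))
    (hrec1 : ∀ t, d1 (t + 1) = (s : ℤ) • d2 (t + 1) - d1 t)
    (hrec2 : ∀ t, d2 (t + 1) = (r : ℤ) • d1 t - d2 t)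
    (l1 l2 : ℝ) (hl1 : 0 < l1) (hl2 : 0 < l2) :
    (∀ t, 0 < (d1 t).1 * l1 + (d1 t).2 * l2 ∧ 0 < (d2 t).1 * l1 + (d2 t).2 * l2) ∧
    (∀ t, ((d2 t).1 * l1 + (d2 t).2 * l2) / Real.sqrt v
            < ((d1 t).1 * l1 + (d1 t).2 * l2) / Real.sqrt u ∧
          ((d1 t).1 * l1 + (d1 t).2 * l2) / Real.sqrt u
            < ((d2 (t + 1)).1 * l1 + (d2 (t + 1)).2 * l2) / Real.sqrt v) := by
  have hsu : 0 < √(u : ℝ) := Real.sqrt_pos.mpr (by exact_mod_cast hu)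
  have hsv : 0 < √(v : ℝ) := Real.sqrt_pos.mpr (by exact_mod_cast hv)
  set c := √((r : ℝ) * s)
  have hc : 2 ≤ c := Real.le_sqrt_of_sq_le (by norm_num; exact_mod_cast hrs)
  have hcr : (r : ℝ) * √u / √v = c := mul_sqrt_div_sqrt_eq_sqrt_mul (Nat.cast_nonneg r)
    (Nat.cast_nonneg s) (by exact_mod_cast hv) (by exact_mod_cast hm1.symm.trans hm2)
  have hcs : (s : ℝ) * √v / √u = c :=
    (mul_sqrt_div_sqrt_eq_sqrt_mul (Nat.cast_nonneg s) (Nat.cast_nonneg r)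
      (by exact_mod_cast hu) (by exact_mod_cast hm2.symm.trans hm1)).trans (by rw [mul_comm])
  set a : ℕ → ℝ := fun t => dimLength l1 l2 (d2 t) / √v
  set b : ℕ → ℝ := fun t => dimLength l1 l2 (d1 t) / √u
  have ha : ∀ t, a (t + 1) = c * b t - a t := fun t => by
    simpa only [a, b, hrec2] using dimLength_zsmul_sub_div hsu.ne' (by exact_mod_cast hcr) _ _
  have hb : ∀ t, b (t + 1) = c * a (t + 1) - b t := fun t => by
    simpa only [a, b, hrec1] using dimLength_zsmul_sub_div hsv.ne' (by exact_mod_cast hcs) _ _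
  have ha0 : 0 < a 0 := by
    simpa [a, h20, dimLength_apply] using div_pos hl2 hsv
  have hb0 : b 0 = l1 / √u + c * a 0 := by
    simp only [a, b, h10, h20, dimLength_apply, ← hcs]
    push_cast
    field_simp
    ring
  have hab0 : a 0 < b 0 := by
    rw [hb0]
    nlinarith [div_pos hl1 hsu]
  have chain := interleaved_recurrence_pos_lt hc ha hb ha0 hab0
  refine ⟨fun t => ⟨?_, ?_⟩, fun t => ⟨(chain t).2.1, (chain t).2.2⟩⟩
  · exact (div_pos_iff_of_pos_right hsu).mp ((chain t).1.trans (chain t).2.1)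
  · exact (div_pos_iff_of_pos_right hsv).mp (chain t).1
end
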